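/- arXiv:1205.0721 — 8 statements merged into one kernel-verified Lean document; each statement's English description precedes it below -/
import Mathlib

section
/- Strong duality holds between (P) and (D): inf_{x ∈ H} { f(x) + g(Ax) } = sup_{p ∈ ℝ^m} { −f*(A*p) − g*(−p) }, this common value is a real number, and the infimum defining (P) is attained at some x ∈ H. -/
/-!
Both problems are read off the perturbation `Φ (x, w) = f x + g (A x + w)`, which is jointly
convex and lower semicontinuous. Because `dom f` is bounded, the sublevel sets of `Φ` over shrinking
balls in `w` form a decreasing sequence of nonempty bounded closed convex sets in the Hilbert space;
their minimal-norm points form a Cauchy sequence (parallelogram law), so the intersection is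
nonempty. This shows that the set `{(w, t) | ∃ x, Φ (x, w) ≤ t}` contains `(0, r)` as soon as its
closure does: the primal infimum is attained, and every `(0, r)` with `r` below it lies outside
that closure. Separating such a point from this convex set by a non-vertical hyperplane gives a dual
vector `p` whose dual value exceeds `r`. Strong convexity of `g` is used only through convexity.
-/

open scoped RealInnerProductSpace

open Filter Topology Set
open Bornology (IsBounded)

/-- `EReal` is not an `ℝ`-module, so `ConvexOn` does not apply; this is the pointwise form. -/
def ERealConvex {E : Type*} [AddCommGroup E] [Module ℝ E] (f : E → EReal) : Prop :=
  ∀ x y : E, ∀ a b : ℝ, 0 ≤ a → 0 ≤ b → a + b = 1 →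
    f (a • x + b • y) ≤ (a : EReal) * f x + (b : EReal) * f y

def realEpigraph {X : Type*} (f : X → EReal) : Set (X × ℝ) := {p | f p.1 ≤ p.2}

namespace ERealConvex

variable {E F : Type*} [AddCommGroup E] [Module ℝ E] [AddCommGroup F] [Module ℝ F]

lemma comp_linearMap {f : F → EReal} (hf : ERealConvex f) (L : E →ₗ[ℝ] F) :
    ERealConvex (f ∘ L) := by
  intro x y a b ha hb hab
  simpa only [Function.comp_apply, map_add, map_smul] using hf (L x) (L y) a b ha hb hab

lemma add {f g : E → EReal} (hf : ERealConvex f) (hg : ERealConvex g) :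
    ERealConvex (f + g) := by
  intro x y a b ha hb hab
  have distrib (c : ℝ) (hc : 0 ≤ c) (u v : EReal) : (c : EReal) * (u + v) = c * u + c * v :=
    EReal.left_distrib_of_nonneg_of_ne_top (EReal.coe_nonneg.2 hc) (EReal.coe_ne_top c) u v
  calc (f + g) (a • x + b • y) ≤ (a * f x + b * f y) + (a * g x + b * g y) :=
        add_le_add (hf x y a b ha hb hab) (hg x y a b ha hb hab)
    _ = a * (f + g) x + b * (f + g) y := by
        rw [Pi.add_apply, Pi.add_apply, distrib a ha, distrib b hb, add_add_add_comm]

lemma of_convexOn {φ : E → ℝ} (hφ : ConvexOn ℝ univ φ) : ERealConvex fun x ↦ (φ x : EReal) := by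
  intro x y a b ha hb hab
  have h := hφ.2 (mem_univ x) (mem_univ y) ha hb hab
  simp only [smul_eq_mul] at h
  dsimp only
  exact_mod_cast h

lemma of_sub_convexOn {g : E → EReal} {φ : E → ℝ} (hφ : ConvexOn ℝ univ φ)
    (h : ERealConvex fun x ↦ g x - (φ x : EReal)) : ERealConvex g := by
  convert h.add (of_convexOn hφ) using 1
  ext x
  exact EReal.sub_add_cancel.symm

lemma convex_realEpigraph {f : E → EReal} (hf : ERealConvex f) :
    Convex ℝ (realEpigraph f) := by
  rintro ⟨x, s⟩ (hx : f x ≤ s) ⟨y, t⟩ (hy : f y ≤ t) a b ha hb hab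
  show f (a • x + b • y) ≤ ((a * s + b * t : ℝ) : EReal)
  calc f (a • x + b • y) ≤ a * f x + b * f y := hf x y a b ha hb hab
    _ ≤ a * s + b * t := add_le_add (mul_le_mul_of_nonneg_left hx (EReal.coe_nonneg.2 ha))
        (mul_le_mul_of_nonneg_left hy (EReal.coe_nonneg.2 hb))
    _ = ((a * s + b * t : ℝ) : EReal) := by norm_cast

end ERealConvex

lemma convexOn_univ_mul_norm_sq {E : Type*} [SeminormedAddCommGroup E] [NormedSpace ℝ E]
    {c : ℝ} (hc : 0 ≤ c) : ConvexOn ℝ univ fun x : E ↦ c * ‖x‖ ^ 2 :=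
  ((convexOn_norm convex_univ).pow (fun _ _ ↦ norm_nonneg _) 2).smul hc

lemma LowerSemicontinuous.isClosed_realEpigraph {X : Type*} [TopologicalSpace X]
    {f : X → EReal} (hf : LowerSemicontinuous f) : IsClosed (realEpigraph f) :=
  hf.isClosed_epigraph.preimage
    (continuous_fst.prodMk (continuous_coe_real_ereal.comp continuous_snd))

lemma coe_le_of_forall_mem_realEpigraph {X : Type*} {f : X → EReal} {x : X} {s : ℝ}
    (h : ∀ t : ℝ, (x, t) ∈ realEpigraph f → s < t) : (s : EReal) ≤ f x :=
  EReal.le_of_forall_lt_iff_le.1 fun t ht ↦ EReal.coe_le_coe_iff.2 (h t ht.le).le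

section Separation

variable {E : Type*} [NormedAddCommGroup E] [NormedSpace ℝ E]

lemma exists_affine_lt_of_notMem_closure {K : Set (E × ℝ)} (hK : Convex ℝ K) {x₀ : E}
    {r t : ℝ} (hr : (x₀, r) ∉ closure K) (ht : (x₀, t) ∈ K) (hrt : r < t) :
    ∃ (L : E →L[ℝ] ℝ) (c : ℝ), r < L x₀ + c ∧ ∀ p ∈ K, L p.1 + c < p.2 := by
  obtain ⟨ℓ, u, hℓr, hℓK⟩ := geometric_hahn_banach_point_closed hK.closure isClosed_closure hr
  have hℓ (p : E × ℝ) : ℓ p = ℓ (p.1, 0) + p.2 * ℓ (0, 1) := by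
    rw [← smul_eq_mul, ← map_smul, ← map_add]
    simp
  set s := ℓ (0, 1)
  -- `(x₀, t)` lies above `(x₀, r)` and on the other side of the hyperplane: it is not vertical.
  have hs : 0 < s := by
    have hℓt := hℓK _ (subset_closure ht)
    rw [hℓ] at hℓt hℓr
    nlinarith
  set L : E →L[ℝ] ℝ := -s⁻¹ • ℓ.comp (ContinuousLinearMap.inl ℝ E ℝ)
  have hL (x : E) : L x + u / s = (u - ℓ (x, 0)) / s := by
    simp only [L, FunLike.coe_smul, Pi.smul_apply, ContinuousLinearMap.comp_apply,
      ContinuousLinearMap.inl_apply, smul_eq_mul]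
    ring
  refine ⟨L, u / s, ?_, fun p hp ↦ ?_⟩
  · rw [hL, lt_div_iff₀ hs]
    rw [hℓ] at hℓr
    linarith
  · have hℓp := hℓK p (subset_closure hp)
    rw [hℓ] at hℓp
    rw [hL, div_lt_iff₀ hs]
    linarith

lemma exists_affine_minorant {f : E → EReal} (hconv : Convex ℝ (realEpigraph f))
    (hclosed : IsClosed (realEpigraph f)) {x₀ : E} {φ : ℝ} (hx₀ : f x₀ = φ) :
    ∃ (L : E →L[ℝ] ℝ) (c : ℝ), ∀ x, ((L x + c : ℝ) : EReal) ≤ f x := by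
  have hnot : (x₀, φ - 1) ∉ closure (realEpigraph f) := by
    rw [hclosed.closure_eq]
    show ¬ f x₀ ≤ ((φ - 1 : ℝ) : EReal)
    rw [hx₀, not_le, EReal.coe_lt_coe_iff]
    linarith
  obtain ⟨L, c, -, hLc⟩ := exists_affine_lt_of_notMem_closure hconv hnot
    (show f x₀ ≤ φ from hx₀.le) (sub_one_lt φ)
  exact ⟨L, c, fun x ↦ coe_le_of_forall_mem_realEpigraph fun t ht ↦ hLc (x, t) ht⟩

lemma exists_forall_coe_le_of_isBounded {Ψ : E → EReal} {L : E →L[ℝ] ℝ} {c : ℝ}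
    (hL : ∀ x, ((L x + c : ℝ) : EReal) ≤ Ψ x) (hdom : IsBounded {x | Ψ x < ⊤}) :
    ∃ B : ℝ, ∀ x, (B : EReal) ≤ Ψ x := by
  obtain ⟨m, hm⟩ := (L.lipschitz.isBounded_image hdom).bddBelow
  refine ⟨m + c, fun x ↦ ?_⟩
  rcases (le_top : Ψ x ≤ ⊤).eq_or_lt with h | h
  · exact h ▸ le_top
  · exact (EReal.coe_le_coe_iff.2 (by linarith [hm ⟨x, h, rfl⟩])).trans (hL x)

lemma exists_iInf_eq_coe {X F : Type*} [NormedAddCommGroup X] [NormedSpace ℝ X]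
    [NormedAddCommGroup F] [NormedSpace ℝ F] {Φ : X × F → EReal}
    (hconv : Convex ℝ (realEpigraph Φ))
    (hclosed : IsClosed (realEpigraph Φ)) (hdom : IsBounded {x | ∃ w, Φ (x, w) < ⊤})
    {x₁ : X} {φ : ℝ} (hx₁ : Φ (x₁, 0) = φ) : ∃ ρ : ℝ, ⨅ x, Φ (x, 0) = ρ := by
  obtain ⟨L, c, hL⟩ := exists_affine_minorant hconv hclosed hx₁
  obtain ⟨B, hB⟩ := exists_forall_coe_le_of_isBounded (Ψ := fun x ↦ Φ (x, 0))
    (L := L.comp (.inl ℝ X F)) (fun x ↦ hL (x, 0)) (hdom.subset fun x hx ↦ ⟨0, hx⟩)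
  have hbot : ⨅ x, Φ (x, 0) ≠ ⊥ := ne_bot_of_le_ne_bot (EReal.coe_ne_bot B) (le_iInf hB)
  have htop : ⨅ x, Φ (x, 0) ≠ ⊤ :=
    ne_top_of_le_ne_top (EReal.coe_ne_top φ) ((iInf_le _ x₁).trans_eq hx₁)
  exact ⟨_, (EReal.coe_toReal htop hbot).symm⟩

end Separation

section Hilbert

variable {H : Type*} [NormedAddCommGroup H] [InnerProductSpace ℝ H]

lemma exists_forall_norm_le_of_isComplete {K : Set H} (hne : K.Nonempty) (hc : IsComplete K)
    (hK : Convex ℝ K) : ∃ v ∈ K, ∀ z ∈ K, ‖v‖ ≤ ‖z‖ := by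
  obtain ⟨v, hv, hmin⟩ := exists_norm_eq_iInf_of_complete_convex hne hc hK 0
  refine ⟨v, hv, fun z hz ↦ ?_⟩
  calc ‖v‖ = ‖0 - v‖ := by rw [zero_sub, norm_neg]
    _ ≤ ‖0 - z‖ := hmin ▸ ciInf_le ⟨0, forall_mem_range.2 fun _ ↦ norm_nonneg _⟩ (⟨z, hz⟩ : K)
    _ = ‖z‖ := by rw [zero_sub, norm_neg]

/-- The parallelogram law, applied to `x`, `y` and their midpoint in `K`. -/
lemma norm_sub_sq_le_of_forall_le_norm {K : Set H} (hK : Convex ℝ K) {δ : ℝ} (hδ : 0 ≤ δ)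
    (hδK : ∀ z ∈ K, δ ≤ ‖z‖) {x y : H} (hx : x ∈ K) (hy : y ∈ K) :
    ‖x - y‖ ^ 2 ≤ 2 * ‖x‖ ^ 2 + 2 * ‖y‖ ^ 2 - 4 * δ ^ 2 := by
  have hmid : δ ≤ ‖(2 : ℝ)⁻¹ • (x + y)‖ := hδK _ <| by
    simpa [smul_add] using hK hx hy (by norm_num) (by norm_num) (add_halves (1 : ℝ))
  rw [norm_smul, Real.norm_of_nonneg (by norm_num)] at hmid
  have hpar := parallelogram_law_with_norm ℝ x y
  nlinarith

variable [CompleteSpace H]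

theorem nonempty_iInter_of_antitone_convex {Q : ℕ → Set H} (hQ : Antitone Q)
    (hne : ∀ n, (Q n).Nonempty) (hcl : ∀ n, IsClosed (Q n)) (hcv : ∀ n, Convex ℝ (Q n))
    (hbdd : IsBounded (Q 0)) : (⋂ n, Q n).Nonempty := by
  choose v hvQ hvmin using fun n ↦
    exists_forall_norm_le_of_isComplete (hne n) (hcl n).isComplete (hcv n)
  obtain ⟨R, hR⟩ := hbdd.subset_closedBall 0
  have hv_mono : Monotone fun n ↦ ‖v n‖ := fun n k hnk ↦ hvmin n _ (hQ hnk (hvQ k))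
  have hv_bdd : BddAbove (range fun n ↦ ‖v n‖) := ⟨R, forall_mem_range.2 fun n ↦ by
    simpa using hR (hQ (Nat.zero_le n) (hvQ n))⟩
  set D := ⨆ n, ‖v n‖
  have hvD (n : ℕ) : ‖v n‖ ≤ D := le_ciSup hv_bdd n
  have hv_cauchy (n k N : ℕ) (hn : N ≤ n) (hk : N ≤ k) :
      dist (v n) (v k) ≤ √(4 * (D ^ 2 - ‖v N‖ ^ 2)) := by
    rw [dist_eq_norm, ← Real.sqrt_sq (norm_nonneg _)]
    refine Real.sqrt_le_sqrt ?_
    have := norm_sub_sq_le_of_forall_le_norm (hcv N) (norm_nonneg _) (hvmin N)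
      (hQ hn (hvQ n)) (hQ hk (hvQ k))
    nlinarith [hvD n, hvD k, norm_nonneg (v n), norm_nonneg (v k)]
  have hlim : Tendsto (fun N ↦ √(4 * (D ^ 2 - ‖v N‖ ^ 2))) atTop (𝓝 0) := by
    have hD : Tendsto (fun n ↦ ‖v n‖) atTop (𝓝 D) := tendsto_atTop_ciSup hv_mono hv_bdd
    have := ((hD.pow 2).const_sub (D ^ 2) |>.const_mul 4).sqrt
    rwa [sub_self, mul_zero, Real.sqrt_zero] at this
  obtain ⟨x, hx⟩ := cauchySeq_tendsto_of_complete (cauchySeq_of_le_tendsto_0 _ hv_cauchy hlim)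
  refine ⟨x, mem_iInter.2 fun n ↦ (hcl n).mem_of_tendsto hx ?_⟩
  filter_upwards [eventually_ge_atTop n] with k hk using hQ hk (hvQ k)

end Hilbert

def marginalEpigraph {X F : Type*} (Φ : X × F → EReal) : Set (F × ℝ) :=
  {q | ∃ x, Φ (x, q.1) ≤ q.2}

section Marginal

variable {X F : Type*} [NormedAddCommGroup F]

lemma convex_marginalEpigraph [AddCommGroup X] [Module ℝ X] [NormedSpace ℝ F]
    {Φ : X × F → EReal} (hΦ : Convex ℝ (realEpigraph Φ)) :
    Convex ℝ (marginalEpigraph Φ) := by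
  rintro ⟨w₁, t₁⟩ ⟨x₁, h₁⟩ ⟨w₂, t₂⟩ ⟨x₂, h₂⟩ a b ha hb hab
  exact ⟨a • x₁ + b • x₂, hΦ (x := ((x₁, w₁), t₁)) (y := ((x₂, w₂), t₂)) h₁ h₂ ha hb hab⟩

lemma mem_closure_marginalEpigraph {Φ : X × F → EReal} {r : ℝ} (h : ⨅ x, Φ (x, 0) ≤ r) :
    ((0 : F), r) ∈ closure (marginalEpigraph Φ) := by
  refine mem_closure_of_tendsto (b := atTop) (f := fun n : ℕ ↦ ((0 : F), r + 1 / (n + 1)))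
    (tendsto_const_nhds.prodMk_nhds ?_) (Eventually.of_forall fun n ↦ ?_)
  · simpa using tendsto_one_div_add_atTop_nhds_zero_nat.const_add r
  · obtain ⟨x, hx⟩ := iInf_lt_iff.1 (h.trans_lt (EReal.coe_lt_coe_iff.2
      (lt_add_of_pos_right r Nat.one_div_pos_of_nat)))
    exact ⟨x, hx.le⟩

variable [NormedAddCommGroup X] [InnerProductSpace ℝ X] [CompleteSpace X] [NormedSpace ℝ F]
  [ProperSpace F]

theorem exists_le_of_mem_closure_marginalEpigraph {Φ : X × F → EReal}
    (hconv : Convex ℝ (realEpigraph Φ)) (hclosed : IsClosed (realEpigraph Φ))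
    (hdom : IsBounded {x | ∃ w, Φ (x, w) < ⊤}) {r : ℝ}
    (hr : ((0 : F), r) ∈ closure (marginalEpigraph Φ)) : ∃ x, Φ (x, 0) ≤ r := by
  set ε : ℕ → ℝ := fun n ↦ 1 / (n + 1)
  have hε_anti : Antitone ε := fun n k hnk ↦ Nat.one_div_le_one_div hnk
  set Q : ℕ → Set X := fun n ↦
    {x | ∃ w ∈ Metric.closedBall (0 : F) (ε n), ((x, w), r + ε n) ∈ realEpigraph Φ}
  have hQ_anti : Antitone Q := by
    rintro n k hnk x ⟨w, hw, hΦ⟩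
    refine ⟨w, Metric.closedBall_subset_closedBall (hε_anti hnk) hw, ?_⟩
    exact hΦ.trans (EReal.coe_le_coe_iff.2 (by linarith [hε_anti hnk]))
  have hQ_ne (n : ℕ) : (Q n).Nonempty := by
    obtain ⟨⟨w, t⟩, ⟨x, hx⟩, hdist⟩ := Metric.mem_closure_iff.1 hr (ε n) Nat.one_div_pos_of_nat
    rw [Prod.dist_eq, max_lt_iff, dist_comm, dist_zero_right, Real.dist_eq, abs_lt] at hdist
    exact ⟨x, w, mem_closedBall_zero_iff.2 hdist.1.le,
      hx.trans (EReal.coe_le_coe_iff.2 (by linarith [hdist.2.1]))⟩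
  have hQ_closed (n : ℕ) : IsClosed (Q n) :=
    (hclosed.preimage (continuous_id.prodMk continuous_const)).relPreimage_of_isCompact
      (isCompact_closedBall _ _)
  have hQ_convex (n : ℕ) : Convex ℝ (Q n) := by
    rintro x₁ ⟨w₁, hw₁, h₁⟩ x₂ ⟨w₂, hw₂, h₂⟩ a b ha hb hab
    refine ⟨a • w₁ + b • w₂, convex_closedBall _ _ hw₁ hw₂ ha hb hab, ?_⟩
    simpa [← add_mul, hab] using hconv h₁ h₂ ha hb hab
  have hQ_bdd : IsBounded (Q 0) :=
    hdom.subset fun x ⟨w, _, hΦ⟩ ↦ ⟨w, hΦ.trans_lt (EReal.coe_lt_top _)⟩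
  obtain ⟨x, hx⟩ := nonempty_iInter_of_antitone_convex hQ_anti hQ_ne hQ_closed hQ_convex hQ_bdd
  choose w hw hΦw using mem_iInter.1 hx
  have hε : Tendsto ε atTop (𝓝 0) := tendsto_one_div_add_atTop_nhds_zero_nat
  have hw0 : Tendsto w atTop (𝓝 0) :=
    squeeze_zero_norm (fun n ↦ mem_closedBall_zero_iff.1 (hw n)) hε
  refine ⟨x, show ((x, (0 : F)), r) ∈ realEpigraph Φ from
    hclosed.mem_of_tendsto (b := atTop) ?_ (Eventually.of_forall hΦw)⟩
  exact (tendsto_const_nhds.prodMk_nhds hw0).prodMk_nhds (by simpa using hε.const_add r)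

lemma exists_apply_eq_iInf {Φ : X × F → EReal} (hconv : Convex ℝ (realEpigraph Φ))
    (hclosed : IsClosed (realEpigraph Φ)) (hdom : IsBounded {x | ∃ w, Φ (x, w) < ⊤})
    {ρ : ℝ} (hρ : ⨅ x, Φ (x, 0) = ρ) : ∃ x₀, Φ (x₀, 0) = ⨅ x, Φ (x, 0) := by
  obtain ⟨x₀, hx₀⟩ := exists_le_of_mem_closure_marginalEpigraph hconv hclosed hdom
    (mem_closure_marginalEpigraph hρ.le)
  exact ⟨x₀, le_antisymm (hρ ▸ hx₀) (iInf_le _ x₀)⟩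

end Marginal

section PerturbationDuality

variable {X F : Type*} [NormedAddCommGroup X] [InnerProductSpace ℝ X] [CompleteSpace X]
  [NormedAddCommGroup F] [InnerProductSpace ℝ F] [ProperSpace F] {Φ : X × F → EReal}

lemma exists_affine_minorant_of_lt_iInf (hconv : Convex ℝ (realEpigraph Φ))
    (hclosed : IsClosed (realEpigraph Φ)) (hdom : IsBounded {x | ∃ w, Φ (x, w) < ⊤})
    {x₁ : X} {φ : ℝ} (hx₁ : Φ (x₁, 0) = φ) {r : ℝ} (hr : (r : EReal) < ⨅ x, Φ (x, 0)) :
    ∃ (p : F) (c : ℝ), r < c ∧ ∀ x w, ((c - ⟪p, w⟫ : ℝ) : EReal) ≤ Φ (x, w) := by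
  have hr_not : ((0 : F), r) ∉ closure (marginalEpigraph Φ) := fun hmem ↦ by
    obtain ⟨x, hx⟩ := exists_le_of_mem_closure_marginalEpigraph hconv hclosed hdom hmem
    exact (hr.trans_le (iInf_le _ x)).not_ge hx
  have hrφ : r < φ := EReal.coe_lt_coe_iff.1 (hr.trans_le ((iInf_le _ x₁).trans_eq hx₁))
  obtain ⟨L, c, hrc, hLc⟩ := exists_affine_lt_of_notMem_closure
    (convex_marginalEpigraph hconv) hr_not ⟨x₁, hx₁.le⟩ hrφ
  refine ⟨-(InnerProductSpace.toDual ℝ F).symm L, c, by simpa using hrc, fun x w ↦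
    coe_le_of_forall_mem_realEpigraph (x := (x, w)) fun t ht ↦ ?_⟩
  rw [inner_neg_left, InnerProductSpace.toDual_symm_apply, sub_neg_eq_add, add_comm]
  exact hLc (w, t) ⟨x, ht⟩

end PerturbationDuality

noncomputable def fenchelConj {E : Type*} [NormedAddCommGroup E] [InnerProductSpace ℝ E]
    (f : E → EReal) (q : E) : EReal :=
  ⨆ x, ((⟪q, x⟫ : ℝ) : EReal) - f x

section Conjugate

variable {E : Type*} [NormedAddCommGroup E] [InnerProductSpace ℝ E]

lemma coe_inner_sub_le_fenchelConj {f : E → EReal} {x : E} {φ : ℝ} (hx : f x = φ) (q : E) :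
    ((⟪q, x⟫ - φ : ℝ) : EReal) ≤ fenchelConj f q :=
  le_iSup_of_le x (by rw [hx, EReal.coe_sub])

lemma fenchelConj_ne_bot {f : E → EReal} {x : E} (hx : f x ≠ ⊤) (q : E) :
    fenchelConj f q ≠ ⊥ := by
  refine ne_bot_of_le_ne_bot ?_ (le_iSup (fun x ↦ ((⟪q, x⟫ : ℝ) : EReal) - f x) x)
  rw [sub_eq_add_neg, EReal.add_ne_bot_iff]
  simpa using hx

end Conjugate

section Perturbation

variable {H F : Type*} [NormedAddCommGroup H] [InnerProductSpace ℝ H]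
  [NormedAddCommGroup F] [InnerProductSpace ℝ F] {f : H → EReal} {g : F → EReal}

noncomputable def perturbation (f : H → EReal) (g : F → EReal) (A : H →L[ℝ] F) (p : H × F) :
    EReal :=
  f p.1 + g (A p.1 + p.2)

@[simp]
lemma perturbation_mk_zero (A : H →L[ℝ] F) (x : H) :
    perturbation f g A (x, 0) = f x + g (A x) := by
  rw [perturbation, add_zero]

lemma convex_realEpigraph_perturbation (A : H →L[ℝ] F) (hf : ERealConvex f)
    (hg : ERealConvex g) : Convex ℝ (realEpigraph (perturbation f g A)) :=
  ((hf.comp_linearMap (LinearMap.fst ℝ H F)).add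
    (hg.comp_linearMap (A.coprod (.id ℝ F)).toLinearMap)).convex_realEpigraph

lemma isClosed_realEpigraph_perturbation (A : H →L[ℝ] F) (hf : LowerSemicontinuous f)
    (hg : LowerSemicontinuous g) (hf_bot : ∀ x, f x ≠ ⊥) (hg_bot : ∀ v, g v ≠ ⊥) :
    IsClosed (realEpigraph (perturbation f g A)) :=
  ((hf.comp continuous_fst).add'
    (hg.comp ((A.continuous.comp continuous_fst).add continuous_snd)) fun _ ↦
      EReal.continuousAt_add (.inr (hg_bot _)) (.inl (hf_bot _))).isClosed_realEpigraph

lemma isBounded_dom_perturbation (A : H →L[ℝ] F) (hg_bot : ∀ v, g v ≠ ⊥)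
    (hf_dom : IsBounded {x | f x < ⊤}) :
    IsBounded {x | ∃ w, perturbation f g A (x, w) < ⊤} :=
  hf_dom.subset fun x ⟨w, hw⟩ ↦ lt_top_iff_ne_top.2 fun (hx : f x = ⊤) ↦ hw.ne <| by
    rw [perturbation, hx, EReal.top_add_of_ne_bot (hg_bot _)]

variable [CompleteSpace H] [CompleteSpace F] {A : H →L[ℝ] F}

theorem iSup_dual_le_iInf (hf : ∀ x, f x ≠ ⊥) (hg : ∀ v, g v ≠ ⊥) :
    ⨆ p, -fenchelConj f (A.adjoint p) - fenchelConj g (-p) ≤ ⨅ x, f x + g (A x) := by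
  refine iSup_le fun p ↦ le_iInf fun x ↦ ?_
  by_cases hfx : f x = ⊤
  · rw [hfx, EReal.top_add_of_ne_bot (hg _)]
    exact le_top
  by_cases hgx : g (A x) = ⊤
  · rw [hgx, EReal.add_top_of_ne_bot (hf _)]
    exact le_top
  lift f x to ℝ using ⟨hfx, hf x⟩ with φ hφ
  lift g (A x) to ℝ using ⟨hgx, hg _⟩ with γ hγ
  calc -fenchelConj f (A.adjoint p) - fenchelConj g (-p)
      ≤ -((⟪A.adjoint p, x⟫ - φ : ℝ) : EReal) - ((⟪-p, A x⟫ - γ : ℝ) : EReal) :=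
        EReal.sub_le_sub (EReal.neg_le_neg_iff.2 (coe_inner_sub_le_fenchelConj hφ.symm _))
          (coe_inner_sub_le_fenchelConj hγ.symm _)
    _ = ((φ + γ : ℝ) : EReal) := by
        rw [← EReal.coe_neg, ← EReal.coe_sub, inner_neg_left,
          ContinuousLinearMap.adjoint_inner_left]
        ring_nf
    _ = φ + γ := EReal.coe_add φ γ

theorem coe_le_neg_fenchelConj_sub (hf_top : ∃ x, f x ≠ ⊤) (hg_top : ∃ v, g v ≠ ⊤)
    (hf : ∀ x, f x ≠ ⊥) (hg : ∀ v, g v ≠ ⊥) {p : F} {c : ℝ}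
    (h : ∀ x w, ((c - ⟪p, w⟫ : ℝ) : EReal) ≤ perturbation f g A (x, w)) :
    (c : EReal) ≤ -fenchelConj f (A.adjoint p) - fenchelConj g (-p) := by
  obtain ⟨x₁, hx₁⟩ := hf_top
  obtain ⟨v₁, hv₁⟩ := hg_top
  rw [← EReal.neg_add (.inl (fenchelConj_ne_bot hx₁ _)) (.inr (fenchelConj_ne_bot hv₁ _)),
    EReal.le_neg]
  refine EReal.add_le_of_forall_lt fun a ha b hb ↦ ?_
  obtain ⟨x, hx⟩ := lt_iSup_iff.1 ha
  obtain ⟨v, hv⟩ := lt_iSup_iff.1 hb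
  refine (add_le_add hx.le hv.le).trans ?_
  by_cases hfx : f x = ⊤
  · simp [hfx]
  by_cases hgv : g v = ⊤
  · simp [hgv]
  lift f x to ℝ using ⟨hfx, hf x⟩ with φ hφ
  lift g v to ℝ using ⟨hgv, hg v⟩ with γ hγ
  have hxv := h x (v - A x)
  rw [perturbation, add_sub_cancel, ← hφ, ← hγ, inner_sub_right,
    ← ContinuousLinearMap.adjoint_inner_left] at hxv
  rw [inner_neg_left]
  norm_cast at hxv ⊢
  linarith

end Perturbation

/-- Strong duality holds between (P) and (D):
`inf_{x ∈ H} { f(x) + g(Ax) } = sup_{p ∈ ℝ^m} { −f*(A*p) − g*(−p) }`, this common value is a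
real number, and the infimum defining (P) is attained at some `x ∈ H`. -/
theorem strong_duality
    {H : Type*} [NormedAddCommGroup H] [InnerProductSpace ℝ H] [CompleteSpace H]
    {m : ℕ} (μ : ℝ) (hμ : 0 < μ)
    (f : H → EReal) (g : EuclideanSpace ℝ (Fin m) → EReal)
    (hf_proper_top : ∃ x, f x ≠ ⊤) (hf_proper_bot : ∀ x, f x ≠ ⊥)
    (hf_convex : ∀ x y : H, ∀ a b : ℝ, 0 ≤ a → 0 ≤ b → a + b = 1 →
      f (a • x + b • y) ≤ (a : EReal) * f x + (b : EReal) * f y)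
    (hf_lsc : LowerSemicontinuous f)
    (hf_bdd : Bornology.IsBounded {x : H | f x < ⊤})
    (hg_proper_top : ∃ x, g x ≠ ⊤) (hg_proper_bot : ∀ x, g x ≠ ⊥)
    (hg_lsc : LowerSemicontinuous g)
    (hg_strconv : ∀ x y : EuclideanSpace ℝ (Fin m), ∀ a b : ℝ, 0 ≤ a → 0 ≤ b → a + b = 1 →
      g (a • x + b • y) - ((μ / 2 * ‖a • x + b • y‖ ^ 2 : ℝ) : EReal) ≤
        (a : EReal) * (g x - ((μ / 2 * ‖x‖ ^ 2 : ℝ) : EReal)) +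
        (b : EReal) * (g y - ((μ / 2 * ‖y‖ ^ 2 : ℝ) : EReal)))
    (A : H →L[ℝ] EuclideanSpace ℝ (Fin m))
    (hfeas : ∃ x : H, f x ≠ ⊤ ∧ g (A x) ≠ ⊤) :
    (⨅ x : H, f x + g (A x)) =
      (⨆ p : EuclideanSpace ℝ (Fin m),
        -(⨆ x : H, ((⟪ContinuousLinearMap.adjoint A p, x⟫ : ℝ) : EReal) - f x)
          - (⨆ x : EuclideanSpace ℝ (Fin m), ((⟪-p, x⟫ : ℝ) : EReal) - g x)) ∧
    (∃ r : ℝ, (⨅ x : H, f x + g (A x)) = (r : EReal)) ∧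
    (∃ x₀ : H, f x₀ + g (A x₀) = ⨅ x : H, f x + g (A x)) := by
  obtain ⟨xf, hxf_f, hxf_g⟩ := hfeas
  have hg_convex : ERealConvex g :=
    .of_sub_convexOn (convexOn_univ_mul_norm_sq (half_pos hμ).le) hg_strconv
  have hconv := convex_realEpigraph_perturbation A hf_convex hg_convex
  have hclosed := isClosed_realEpigraph_perturbation A hf_lsc hg_lsc hf_proper_bot hg_proper_bot
  have hdom := isBounded_dom_perturbation A hg_proper_bot hf_bdd
  obtain ⟨φ, hφ⟩ : ∃ φ : ℝ, perturbation f g A (xf, 0) = φ := by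
    lift f xf to ℝ using ⟨hxf_f, hf_proper_bot xf⟩ with a ha
    lift g (A xf) to ℝ using ⟨hxf_g, hg_proper_bot _⟩ with b hb
    exact ⟨a + b, by rw [perturbation_mk_zero, ← ha, ← hb, EReal.coe_add]⟩
  obtain ⟨ρ, hρ⟩ := exists_iInf_eq_coe hconv hclosed hdom hφ
  obtain ⟨x₀, hx₀⟩ := exists_apply_eq_iInf hconv hclosed hdom hρ
  have hdual (r : ℝ) (hr : (r : EReal) < ⨅ x, perturbation f g A (x, 0)) :
      (r : EReal) ≤ ⨆ p, -fenchelConj f (A.adjoint p) - fenchelConj g (-p) := by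
    obtain ⟨p, c, hrc, hpc⟩ := exists_affine_minorant_of_lt_iInf hconv hclosed hdom hφ hr
    exact (EReal.coe_le_coe_iff.2 hrc.le).trans <| le_iSup_of_le p <|
      coe_le_neg_fenchelConj_sub hf_proper_top hg_proper_top hf_proper_bot hg_proper_bot hpc
  simp only [perturbation_mk_zero] at hρ hx₀ hdual
  refine ⟨le_antisymm ?_ (iSup_dual_le_iInf hf_proper_bot hg_proper_bot), ⟨ρ, hρ⟩, x₀, hx₀⟩
  exact hρ ▸ EReal.ge_of_forall_gt_iff_ge.1 fun r hr ↦ hdual r (hr.trans_eq hρ.symm)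
end

section
/- Let ρ > 0 and for each p ∈ ℝ^m let x_{f,p} ∈ H be the unique minimizer of x ↦ f(x) + (ρ/2)‖ A*p/ρ − x ‖² (equivalently, the unique maximizer of x ↦ ⟨A*p,x⟩ − f(x) − (ρ/2)‖x‖²). Then for all p, q ∈ ℝ^m one has ‖ A x_{f,p} − A x_{f,q} ‖ ≤ (‖A‖²/ρ) ‖ p − q ‖. -/
open scoped RealInnerProductSpace

open Filter Topology

/-!
`x_{f,p}` is the proximal point of `f / ρ` at `A* p / ρ`. Comparing its minimality with the values
along the segment towards any `x`, and letting the step tend to `0`, gives the subgradient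
inequality `ρ ⟪a - u, x - u⟫ ≤ f x - f u`. Adding it for two proximal points shows that the
proximal map is firmly nonexpansive, `‖u - v‖² ≤ ⟪a - b, u - v⟫`, hence `1`-Lipschitz; composing
with `A* / ρ` and `A` costs the factor `‖A‖² / ρ`.
-/

section

variable {E : Type*}

def ConvexEReal [AddCommGroup E] [Module ℝ E] (f : E → EReal) : Prop :=
  ∀ x y : E, ∀ a b : ℝ, 0 ≤ a → 0 ≤ b → a + b = 1 →
    f (a • x + b • y) ≤ (a : EReal) * f x + (b : EReal) * f y

theorem ConvexEReal.le_segment [AddCommGroup E] [Module ℝ E] {f : E → EReal} (hf : ConvexEReal f)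
    {u x : E} {fu fx : ℝ} (hu : f u = fu) (hx : f x = fx) {t : ℝ} (ht₀ : 0 ≤ t) (ht₁ : t ≤ 1) :
    f (u + t • (x - u)) ≤ (((1 - t) * fu + t * fx : ℝ) : EReal) := by
  have h := hf u x (1 - t) t (by linarith) ht₀ (by ring)
  rwa [hu, hx, show (1 - t) • u + t • x = u + t • (x - u) by module] at h

variable [NormedAddCommGroup E]

def IsProxPoint (f : E → EReal) (ρ : ℝ) (a u : E) : Prop :=
  ∀ x, f u + ((ρ / 2 * ‖a - u‖ ^ 2 : ℝ) : EReal) ≤ f x + ((ρ / 2 * ‖a - x‖ ^ 2 : ℝ) : EReal)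

variable {f : E → EReal} {ρ : ℝ} {a b u v x : E} {fu fv fx : ℝ}

theorem IsProxPoint.ne_top (h : IsProxPoint f ρ a u) (hx : f x ≠ ⊤) : f u ≠ ⊤ := by
  intro hu
  have hle := h x
  rw [hu, EReal.top_add_coe, top_le_iff] at hle
  exact (EReal.add_lt_top hx (EReal.coe_ne_top _)).ne hle

theorem IsProxPoint.exists_coe_eq (h : IsProxPoint f ρ a u) (hbot : f u ≠ ⊥) (hx : f x ≠ ⊤) :
    ∃ c : ℝ, f u = c :=
  ⟨(f u).toReal, (EReal.coe_toReal (h.ne_top hx) hbot).symm⟩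

variable [InnerProductSpace ℝ E]

/-- The first-order optimality condition `ρ (a - u) ∈ ∂f(u)`. -/
theorem IsProxPoint.mul_inner_le (hf : ConvexEReal f) (h : IsProxPoint f ρ a u)
    (hu : f u = fu) (hx : f x = fx) : ρ * ⟪a - u, x - u⟫ ≤ fx - fu := by
  have hsmall : ∀ t : ℝ, 0 < t → t ≤ 1 →
      ρ * ⟪a - u, x - u⟫ - (fx - fu) ≤ t * (ρ / 2 * ‖x - u‖ ^ 2) := by
    intro t ht₀ ht₁
    have hle : fu + ρ / 2 * ‖a - u‖ ^ 2 ≤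
        (1 - t) * fu + t * fx + ρ / 2 * ‖(a - u) - t • (x - u)‖ ^ 2 := by
      have h' := (h (u + t • (x - u))).trans (add_le_add_left (hf.le_segment hu hx ht₀.le ht₁) _)
      rw [hu, ← sub_sub] at h'
      exact_mod_cast h'
    rw [norm_sub_sq_real (a - u), real_inner_smul_right, norm_smul, mul_pow, Real.norm_eq_abs,
      sq_abs] at hle
    have hscaled : t * (ρ * ⟪a - u, x - u⟫ - (fx - fu)) ≤ t * (t * (ρ / 2 * ‖x - u‖ ^ 2)) := by
      nlinarith
    exact le_of_mul_le_mul_left hscaled ht₀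
  have hlim : Tendsto (fun t : ℝ => t * (ρ / 2 * ‖x - u‖ ^ 2)) (𝓝[>] 0) (𝓝 0) :=
    ((continuous_mul_const _).tendsto' 0 0 (zero_mul _)).mono_left nhdsWithin_le_nhds
  refine sub_nonpos.1 (ge_of_tendsto hlim ?_)
  filter_upwards [Ioc_mem_nhdsGT one_pos] with t ht using hsmall t ht.1 ht.2

theorem IsProxPoint.norm_sub_sq_le_inner (hf : ConvexEReal f) (hρ : 0 < ρ)
    (hu : IsProxPoint f ρ a u) (hv : IsProxPoint f ρ b v) (hfu : f u = fu) (hfv : f v = fv) :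
    ‖u - v‖ ^ 2 ≤ ⟪a - b, u - v⟫ := by
  have h₁ := hu.mul_inner_le hf hfu hfv
  have h₂ := hv.mul_inner_le hf hfv hfu
  have hsum : ⟪a - u, v - u⟫ + ⟪b - v, u - v⟫ = ‖u - v‖ ^ 2 - ⟪a - b, u - v⟫ := by
    rw [← real_inner_self_eq_norm_sq, ← neg_sub u v, inner_neg_right, neg_add_eq_sub,
      ← inner_sub_left, show b - v - (a - u) = (u - v) - (a - b) by abel, inner_sub_left]
  nlinarith

theorem norm_le_of_norm_sq_le_inner (h : ‖x‖ ^ 2 ≤ ⟪a, x⟫) : ‖x‖ ≤ ‖a‖ := by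
  rcases (norm_nonneg x).eq_or_lt with hx | hx
  · rw [← hx]; exact norm_nonneg a
  · refine le_of_mul_le_mul_right ?_ hx
    calc ‖x‖ * ‖x‖ = ‖x‖ ^ 2 := (sq _).symm
      _ ≤ ⟪a, x⟫ := h
      _ ≤ ‖a‖ * ‖x‖ := real_inner_le_norm a x

end

theorem smoothed_gradient_lipschitz_general
    {H : Type*} [NormedAddCommGroup H] [InnerProductSpace ℝ H] [CompleteSpace H]
    {m : ℕ}
    (f : H → EReal)
    (hf_proper_top : ∃ x, f x ≠ ⊤) (hf_proper_bot : ∀ x, f x ≠ ⊥)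
    (hf_convex : ∀ x y : H, ∀ a b : ℝ, 0 ≤ a → 0 ≤ b → a + b = 1 →
      f (a • x + b • y) ≤ (a : EReal) * f x + (b : EReal) * f y)
    (A : H →L[ℝ] EuclideanSpace ℝ (Fin m))
    (ρ : ℝ) (hρ : 0 < ρ)
    (xf : EuclideanSpace ℝ (Fin m) → H)
    (hxf : ∀ (p : EuclideanSpace ℝ (Fin m)) (x : H),
      f (xf p) + ((ρ / 2 * ‖ρ⁻¹ • ContinuousLinearMap.adjoint A p - xf p‖ ^ 2 : ℝ) : EReal) ≤
        f x + ((ρ / 2 * ‖ρ⁻¹ • ContinuousLinearMap.adjoint A p - x‖ ^ 2 : ℝ) : EReal)) :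
    ∀ p q : EuclideanSpace ℝ (Fin m),
      ‖A (xf p) - A (xf q)‖ ≤ ‖A‖ ^ 2 / ρ * ‖p - q‖ := by
  intro p q
  obtain ⟨x₀, hx₀⟩ := hf_proper_top
  obtain ⟨fp, hfp⟩ := IsProxPoint.exists_coe_eq (hxf p) (hf_proper_bot _) hx₀
  obtain ⟨fq, hfq⟩ := IsProxPoint.exists_coe_eq (hxf q) (hf_proper_bot _) hx₀
  have hprox := norm_le_of_norm_sq_le_inner <|
    IsProxPoint.norm_sub_sq_le_inner hf_convex hρ (hxf p) (hxf q) hfp hfq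
  rw [← smul_sub, ← map_sub] at hprox
  calc ‖A (xf p) - A (xf q)‖ ≤ ‖A‖ * ‖xf p - xf q‖ := by
        rw [← map_sub]; exact A.le_opNorm _
    _ ≤ ‖A‖ * (ρ⁻¹ * (‖A‖ * ‖p - q‖)) := by
        grw [hprox, norm_smul, Real.norm_of_nonneg (inv_nonneg.2 hρ.le),
          (ContinuousLinearMap.adjoint A).le_opNorm, LinearIsometryEquiv.norm_map]
    _ = ‖A‖ ^ 2 / ρ * ‖p - q‖ := by ring

/-- Let `ρ > 0` and for each `p ∈ ℝ^m` let `x_{f,p} ∈ H` be the (unique) minimizer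
of `x ↦ f(x) + (ρ/2)‖ A*p/ρ − x ‖²` (equivalently, the unique maximizer of
`x ↦ ⟨A*p,x⟩ − f(x) − (ρ/2)‖x‖²`). Then for all `p, q ∈ ℝ^m` one has
`‖ A x_{f,p} − A x_{f,q} ‖ ≤ (‖A‖²/ρ) ‖ p − q ‖`. -/
theorem smoothed_gradient_lipschitz
    {H : Type*} [NormedAddCommGroup H] [InnerProductSpace ℝ H] [CompleteSpace H]
    {m : ℕ}
    (f : H → EReal)
    (hf_proper_top : ∃ x, f x ≠ ⊤) (hf_proper_bot : ∀ x, f x ≠ ⊥)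
    (hf_convex : ∀ x y : H, ∀ a b : ℝ, 0 ≤ a → 0 ≤ b → a + b = 1 →
      f (a • x + b • y) ≤ (a : EReal) * f x + (b : EReal) * f y)
    (hf_lsc : LowerSemicontinuous f)
    (A : H →L[ℝ] EuclideanSpace ℝ (Fin m))
    (ρ : ℝ) (hρ : 0 < ρ)
    (xf : EuclideanSpace ℝ (Fin m) → H)
    (hxf : ∀ (p : EuclideanSpace ℝ (Fin m)) (x : H),
      f (xf p) + ((ρ / 2 * ‖ρ⁻¹ • ContinuousLinearMap.adjoint A p - xf p‖ ^ 2 : ℝ) : EReal) ≤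
        f x + ((ρ / 2 * ‖ρ⁻¹ • ContinuousLinearMap.adjoint A p - x‖ ^ 2 : ℝ) : EReal)) :
    ∀ p q : EuclideanSpace ℝ (Fin m),
      ‖A (xf p) - A (xf q)‖ ≤ ‖A‖ ^ 2 / ρ * ‖p - q‖ :=
  smoothed_gradient_lipschitz_general f hf_proper_top hf_proper_bot hf_convex A ρ hρ xf hxf
end

section
/- If f is ρ-strongly convex for some ρ > 0, then the function p ↦ f*(A*p) is differentiable on ℝ^m, for each p ∈ ℝ^m its gradient equals A x_{f,p} where x_{f,p} is the unique minimizer of x ↦ f(x) − ⟨A*p,x⟩, and this gradient is Lipschitz continuous with Lipschitz constant ‖A‖²/ρ. -/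
/-!
On the effective domain of `f`, strong convexity of `g = f.toReal` gives quadratic growth
`g x₀ - ⟪v, x₀⟫ + ρ / 2 * ‖x - x₀‖ ^ 2 ≤ g x - ⟪v, x⟫` around a minimiser `x₀` of the tilted
function `g - ⟪v, ·⟫`. The midpoint inequality makes minimising sequences Cauchy, so minimisers
exist by completeness and lower semicontinuity, and quadratic growth makes them unique. Adding the
growth inequalities for the tilts by `A* p` and `A* q` gives `ρ ‖x_p - x_q‖ ≤ ‖A* p - A* q‖`,
whence the Lipschitz bound. Finally `A x_p` is a subgradient of `F` at `p`, and a Lipschitz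
subgradient field `G` squeezes `F r - F p - ⟪G p, r - p⟫` between `0` and
`⟪G r - G p, r - p⟫ = O(‖r - p‖ ^ 2)`, so `G p` is the gradient.
-/

open scoped RealInnerProductSpace
open Filter Topology Set

section StrongConvexOn

variable {E : Type*} [NormedAddCommGroup E] [InnerProductSpace ℝ E] {s : Set E} {m : ℝ}
  {g : E → ℝ}

lemma StrongConvexOn.sub_inner (hg : StrongConvexOn s m g) (v : E) :
    StrongConvexOn s m fun x => g x - ⟪v, x⟫ := by
  rw [strongConvexOn_iff_convex] at hg ⊢
  have hsplit : (fun x => g x - ⟪v, x⟫ - m / 2 * ‖x‖ ^ 2) =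
      (fun x => g x - m / 2 * ‖x‖ ^ 2) - ⇑(innerₛₗ ℝ v) := by
    ext x
    simp only [Pi.sub_apply, innerₛₗ_apply_apply]
    ring
  rw [hsplit]
  exact hg.sub ((innerₛₗ ℝ v).concaveOn hg.1)

lemma StrongConvexOn.add_sq_le_of_isMinOn (hg : StrongConvexOn s m g) {x₀ x : E}
    (hx₀ : x₀ ∈ s) (hx : x ∈ s) (hmin : IsMinOn g s x₀) :
    g x₀ + m / 2 * ‖x - x₀‖ ^ 2 ≤ g x := by
  have hsegment : ∀ t ∈ Ioc (0 : ℝ) 1, g x₀ + (1 - t) * (m / 2 * ‖x - x₀‖ ^ 2) ≤ g x := by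
    rintro t ⟨ht₀, ht₁⟩
    have hconv := hg.2 hx hx₀ ht₀.le (sub_nonneg.2 ht₁) (add_sub_cancel t 1)
    have hmin_le :=
      isMinOn_iff.1 hmin _ (hg.1 hx hx₀ ht₀.le (sub_nonneg.2 ht₁) (add_sub_cancel t 1))
    rw [smul_eq_mul, smul_eq_mul] at hconv
    refine le_of_mul_le_mul_left ?_ ht₀
    linarith
  have hlim : Tendsto (fun t : ℝ => g x₀ + (1 - t) * (m / 2 * ‖x - x₀‖ ^ 2)) (𝓝[>] 0)
      (𝓝 (g x₀ + m / 2 * ‖x - x₀‖ ^ 2)) := by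
    have hcont : Continuous fun t : ℝ => g x₀ + (1 - t) * (m / 2 * ‖x - x₀‖ ^ 2) := by fun_prop
    simpa using (hcont.tendsto 0).mono_left nhdsWithin_le_nhds
  exact le_of_tendsto hlim (eventually_of_mem (Ioc_mem_nhdsGT zero_lt_one) hsegment)

lemma StrongConvexOn.eq_of_isMinOn (hg : StrongConvexOn s m g) (hm : 0 < m) {x₀ x₁ : E}
    (hx₀ : x₀ ∈ s) (hx₁ : x₁ ∈ s) (h₀ : IsMinOn g s x₀) (h₁ : IsMinOn g s x₁) : x₀ = x₁ := by
  have hgrowth := hg.add_sq_le_of_isMinOn hx₀ hx₁ h₀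
  have hle := isMinOn_iff.1 h₁ x₀ hx₀
  have hsq : ‖x₁ - x₀‖ ^ 2 ≤ 0 := by nlinarith
  rw [eq_comm, ← sub_eq_zero, ← norm_eq_zero]
  exact pow_eq_zero_iff two_ne_zero |>.1 (le_antisymm hsq (sq_nonneg _))

lemma StrongConvexOn.mul_norm_sub_le_of_isMinOn_sub_inner (hg : StrongConvexOn s m g)
    {u v x₀ x₁ : E} (hx₀ : x₀ ∈ s) (hx₁ : x₁ ∈ s)
    (h₀ : IsMinOn (fun x => g x - ⟪u, x⟫) s x₀) (h₁ : IsMinOn (fun x => g x - ⟪v, x⟫) s x₁) :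
    m * ‖x₀ - x₁‖ ≤ ‖u - v‖ := by
  have hgrowth₀ := (hg.sub_inner u).add_sq_le_of_isMinOn hx₀ hx₁ h₀
  have hgrowth₁ := (hg.sub_inner v).add_sq_le_of_isMinOn hx₁ hx₀ h₁
  have hinner : ⟪u - v, x₀ - x₁⟫ = ⟪u, x₀⟫ - ⟪u, x₁⟫ - ⟪v, x₀⟫ + ⟪v, x₁⟫ := by
    simp only [inner_sub_left, inner_sub_right]
    ring
  have hsq : m * ‖x₀ - x₁‖ * ‖x₀ - x₁‖ ≤ ‖u - v‖ * ‖x₀ - x₁‖ := by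
    rw [norm_sub_rev x₁] at hgrowth₀
    nlinarith [real_inner_le_norm (u - v) (x₀ - x₁)]
  rcases (norm_nonneg (x₀ - x₁)).eq_or_lt with hzero | hpos
  · rw [← hzero, mul_zero]
    exact norm_nonneg _
  · exact le_of_mul_le_mul_right hsq hpos

lemma StrongConvexOn.sq_norm_sub_le_of_le_add (hg : StrongConvexOn s m g) {c ε : ℝ}
    (hlow : ∀ z ∈ s, c ≤ g z) {x y : E} (hx : x ∈ s) (hy : y ∈ s) (hgx : g x ≤ c + ε)
    (hgy : g y ≤ c + ε) : m / 8 * ‖x - y‖ ^ 2 ≤ ε := by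
  have hhalf : (1 / 2 : ℝ) + 1 / 2 = 1 := by norm_num
  have hmid := hg.2 hx hy (by norm_num) (by norm_num) hhalf
  have hc := hlow _ (hg.1 hx hy (by norm_num) (by norm_num) hhalf)
  rw [smul_eq_mul, smul_eq_mul] at hmid
  linarith

lemma StrongConvexOn.exists_isMinOn [CompleteSpace E] (hg : StrongConvexOn s m g) (hm : 0 < m)
    (hclosed : ∀ c, IsClosed {x ∈ s | g x ≤ c}) (hne : s.Nonempty) (hbdd : BddBelow (g '' s)) :
    ∃ x₀ ∈ s, IsMinOn g s x₀ := by
  set c := sInf (g '' s)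
  have hglb : IsGLB (g '' s) c := isGLB_csInf (hne.image g) hbdd
  have hlow : ∀ z ∈ s, c ≤ g z := fun z hz => hglb.1 (mem_image_of_mem g hz)
  have happrox : ∀ n : ℕ, ∃ x ∈ s, g x < c + 1 / (n + 1) := fun n => by
    obtain ⟨_, ⟨x, hx, rfl⟩, -, hlt⟩ :=
      hglb.exists_between (lt_add_of_pos_right c Nat.one_div_pos_of_nat)
    exact ⟨x, hx, hlt⟩
  choose x hxs hxc using happrox
  have hsublevel : ∀ N n : ℕ, N ≤ n → x n ∈ {x ∈ s | g x ≤ c + 1 / (N + 1)} :=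
    fun N n hn => ⟨hxs n, (hxc n).le.trans (by gcongr)⟩
  have hcauchy : CauchySeq x := by
    refine Metric.cauchySeq_iff.2 fun ε hε => ?_
    obtain ⟨N, hN⟩ := exists_nat_one_div_lt (by positivity : 0 < m / 8 * ε ^ 2)
    refine ⟨N, fun n hn k hk => ?_⟩
    have hdiam := hg.sq_norm_sub_le_of_le_add hlow (hsublevel N n hn).1 (hsublevel N k hk).1
      (hsublevel N n hn).2 (hsublevel N k hk).2
    rw [dist_eq_norm]
    refine lt_of_pow_lt_pow_left₀ 2 hε.le (lt_of_mul_lt_mul_left ?_ (by positivity : 0 ≤ m / 8))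
    exact hdiam.trans_lt hN
  obtain ⟨x₀, hlim⟩ := cauchySeq_tendsto_of_complete hcauchy
  have hx₀ : ∀ N : ℕ, x₀ ∈ {x ∈ s | g x ≤ c + 1 / (N + 1)} := fun N =>
    (hclosed _).mem_of_tendsto hlim (eventually_atTop.2 ⟨N, hsublevel N⟩)
  have hgx₀ : g x₀ ≤ c := by
    have hlim' := tendsto_one_div_add_atTop_nhds_zero_nat.const_add c
    rw [add_zero] at hlim'
    exact ge_of_tendsto' hlim' fun N => (hx₀ N).2
  exact ⟨x₀, (hx₀ 0).1, isMinOn_iff.2 fun z hz => hgx₀.trans (hlow z hz)⟩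

end StrongConvexOn

section EReal

variable {H : Type*} [NormedAddCommGroup H] [InnerProductSpace ℝ H] {f : H → EReal}

lemma EReal.sub_coe_eq_coe_toReal_sub {a : EReal} (ha : a ≠ ⊤) (ha' : a ≠ ⊥) (r : ℝ) :
    a - r = ((a.toReal - r : ℝ) : EReal) := by
  rw [EReal.coe_sub, EReal.coe_toReal ha ha']

lemma EReal.coe_sub_eq_coe_sub_toReal {a : EReal} (ha : a ≠ ⊤) (ha' : a ≠ ⊥) (r : ℝ) :
    r - a = ((r - a.toReal : ℝ) : EReal) := by
  rw [EReal.coe_sub, EReal.coe_toReal ha ha']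

lemma strongConvexOn_toReal {ρ : ℝ} (hbot : ∀ x, f x ≠ ⊥)
    (hconv : ∀ x y : H, ∀ a b : ℝ, 0 ≤ a → 0 ≤ b → a + b = 1 →
      f (a • x + b • y) - ((ρ / 2 * ‖a • x + b • y‖ ^ 2 : ℝ) : EReal) ≤
        (a : EReal) * (f x - ((ρ / 2 * ‖x‖ ^ 2 : ℝ) : EReal)) +
        (b : EReal) * (f y - ((ρ / 2 * ‖y‖ ^ 2 : ℝ) : EReal))) :
    StrongConvexOn {x | f x ≠ ⊤} ρ fun x => (f x).toReal := by
  have hcomb : ∀ x ∈ {x | f x ≠ ⊤}, ∀ y ∈ {x | f x ≠ ⊤}, ∀ a b : ℝ, 0 ≤ a → 0 ≤ b → a + b = 1 →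
      f (a • x + b • y) ≠ ⊤ ∧ (f (a • x + b • y)).toReal - ρ / 2 * ‖a • x + b • y‖ ^ 2 ≤
        a * ((f x).toReal - ρ / 2 * ‖x‖ ^ 2) + b * ((f y).toReal - ρ / 2 * ‖y‖ ^ 2) := by
    intro x hx y hy a b ha hb hab
    have h := hconv x y a b ha hb hab
    rw [EReal.sub_coe_eq_coe_toReal_sub hx (hbot x), EReal.sub_coe_eq_coe_toReal_sub hy (hbot y),
      ← EReal.coe_mul, ← EReal.coe_mul, ← EReal.coe_add] at h
    have hz : f (a • x + b • y) ≠ ⊤ := by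
      intro htop
      rw [htop, EReal.top_sub_coe, top_le_iff] at h
      exact EReal.coe_ne_top _ h
    rw [EReal.sub_coe_eq_coe_toReal_sub hz (hbot _), EReal.coe_le_coe_iff] at h
    exact ⟨hz, h⟩
  have hs : Convex ℝ {x | f x ≠ ⊤} := fun x hx y hy a b ha hb hab =>
    (hcomb x hx y hy a b ha hb hab).1
  exact strongConvexOn_iff_convex.2
    ⟨hs, fun x hx y hy a b ha hb hab => (hcomb x hx y hy a b ha hb hab).2⟩

lemma forall_sub_inner_le_iff_isMinOn (hbot : ∀ x, f x ≠ ⊥) (hdom : ∃ x, f x ≠ ⊤) (v x₀ : H) :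
    (∀ x, f x₀ - ((⟪v, x₀⟫ : ℝ) : EReal) ≤ f x - ((⟪v, x⟫ : ℝ) : EReal)) ↔
      x₀ ∈ {x | f x ≠ ⊤} ∧ IsMinOn (fun x => (f x).toReal - ⟪v, x⟫) {x | f x ≠ ⊤} x₀ := by
  constructor
  · intro hmin
    have hx₀ : f x₀ ≠ ⊤ := by
      obtain ⟨x₁, hx₁⟩ := hdom
      intro htop
      have h := hmin x₁
      rw [htop, EReal.top_sub_coe, top_le_iff,
        EReal.sub_coe_eq_coe_toReal_sub hx₁ (hbot x₁)] at h
      exact EReal.coe_ne_top _ h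
    refine ⟨hx₀, isMinOn_iff.2 fun x hx => ?_⟩
    have h := hmin x
    rwa [EReal.sub_coe_eq_coe_toReal_sub hx₀ (hbot x₀),
      EReal.sub_coe_eq_coe_toReal_sub hx (hbot x), EReal.coe_le_coe_iff] at h
  · rintro ⟨hx₀, hmin⟩ x
    by_cases hx : f x = ⊤
    · rw [hx, EReal.top_sub_coe]
      exact le_top
    rw [EReal.sub_coe_eq_coe_toReal_sub hx₀ (hbot x₀),
      EReal.sub_coe_eq_coe_toReal_sub hx (hbot x), EReal.coe_le_coe_iff]
    exact isMinOn_iff.1 hmin x hx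

lemma isGLB_toReal_sub_inner (hbot : ∀ x, f x ≠ ⊥) {v : H} {c : ℝ}
    (hc : (c : EReal) = ⨆ x, ((⟪v, x⟫ : ℝ) : EReal) - f x) :
    IsGLB ((fun x => (f x).toReal - ⟪v, x⟫) '' {x | f x ≠ ⊤}) (-c) := by
  constructor
  · rintro _ ⟨x, hx, rfl⟩
    have h := le_iSup (fun x => ((⟪v, x⟫ : ℝ) : EReal) - f x) x
    rw [← hc, EReal.coe_sub_eq_coe_sub_toReal hx (hbot x), EReal.coe_le_coe_iff] at h
    dsimp only
    linarith
  · intro b hb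
    have hsup : (⨆ x, ((⟪v, x⟫ : ℝ) : EReal) - f x) ≤ ((-b : ℝ) : EReal) := by
      refine iSup_le fun x => ?_
      by_cases hx : f x = ⊤
      · rw [hx, EReal.sub_top]
        exact bot_le
      rw [EReal.coe_sub_eq_coe_sub_toReal hx (hbot x), EReal.coe_le_coe_iff]
      linarith [hb ⟨x, hx, rfl⟩]
    rw [← hc, EReal.coe_le_coe_iff] at hsup
    linarith

lemma isClosed_sublevel_toReal_sub_inner (hbot : ∀ x, f x ≠ ⊥) (hlsc : LowerSemicontinuous f)
    (v : H) (c : ℝ) :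
    IsClosed {x ∈ {x | f x ≠ ⊤} | (f x).toReal - ⟪v, x⟫ ≤ c} := by
  have hlsc' : LowerSemicontinuous fun x => f x - ((⟪v, x⟫ : ℝ) : EReal) := by
    simp_rw [sub_eq_add_neg, ← EReal.coe_neg]
    refine hlsc.add' (EReal.continuous_coe_iff.2 (by fun_prop)).lowerSemicontinuous fun x => ?_
    exact EReal.continuousAt_add (Or.inr (EReal.coe_ne_bot _)) (Or.inr (EReal.coe_ne_top _))
  convert hlsc'.isClosed_preimage (c : EReal) using 1
  ext x
  by_cases hx : f x = ⊤
  · simp [hx]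
  · simp only [mem_ofPred_eq, mem_preimage, mem_Iic, EReal.sub_coe_eq_coe_toReal_sub hx (hbot x),
      EReal.coe_le_coe_iff]
    exact and_iff_right hx

end EReal

section Adjoint

variable {H K : Type*} [NormedAddCommGroup H] [InnerProductSpace ℝ H] [CompleteSpace H]
  [NormedAddCommGroup K] [InnerProductSpace ℝ K] [CompleteSpace K] {s : Set H} {g : H → ℝ}
  {A : H →L[ℝ] K}

lemma StrongConvexOn.norm_map_sub_map_le_of_isMinOn {m : ℝ} (hg : StrongConvexOn s m g)
    (hm : 0 < m) {p q : K} {x₀ x₁ : H} (hx₀ : x₀ ∈ s) (hx₁ : x₁ ∈ s)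
    (h₀ : IsMinOn (fun x => g x - ⟪A.adjoint p, x⟫) s x₀)
    (h₁ : IsMinOn (fun x => g x - ⟪A.adjoint q, x⟫) s x₁) :
    ‖A x₀ - A x₁‖ ≤ ‖A‖ ^ 2 / m * ‖p - q‖ := by
  have hstable := hg.mul_norm_sub_le_of_isMinOn_sub_inner hx₀ hx₁ h₀ h₁
  have hadjoint : ‖A.adjoint p - A.adjoint q‖ ≤ ‖A‖ * ‖p - q‖ := by
    rw [← map_sub, ← LinearIsometryEquiv.norm_map ContinuousLinearMap.adjoint A]
    exact A.adjoint.le_opNorm _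
  calc ‖A x₀ - A x₁‖ ≤ ‖A‖ * ‖x₀ - x₁‖ := by rw [← map_sub]; exact A.le_opNorm _
    _ ≤ ‖A‖ * (‖A‖ * ‖p - q‖ / m) := by
      gcongr
      rw [le_div_iff₀ hm, mul_comm]
      exact hstable.trans hadjoint
    _ = ‖A‖ ^ 2 / m * ‖p - q‖ := by ring

lemma add_inner_le_of_isMinOn_sub_inner_adjoint {F : K → ℝ}
    (hF : ∀ p, IsGLB ((fun x => g x - ⟪A.adjoint p, x⟫) '' s) (-F p)) {p : K} {x₀ : H}
    (hx₀ : x₀ ∈ s) (h₀ : IsMinOn (fun x => g x - ⟪A.adjoint p, x⟫) s x₀) (r : K) :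
    F p + ⟪A x₀, r - p⟫ ≤ F r := by
  have hleast : IsLeast ((fun x => g x - ⟪A.adjoint p, x⟫) '' s) (g x₀ - ⟪A.adjoint p, x₀⟫) :=
    ⟨mem_image_of_mem _ hx₀, forall_mem_image.2 (isMinOn_iff.1 h₀)⟩
  have hvalue : g x₀ - ⟪A.adjoint p, x₀⟫ = -F p := hleast.isGLB.unique (hF p)
  have hlow : -F r ≤ g x₀ - ⟪A.adjoint r, x₀⟫ := (hF r).1 (mem_image_of_mem _ hx₀)
  have hinner : ⟪A x₀, r - p⟫ = ⟪A.adjoint r, x₀⟫ - ⟪A.adjoint p, x₀⟫ := by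
    rw [ContinuousLinearMap.adjoint_inner_left, ContinuousLinearMap.adjoint_inner_left,
      inner_sub_right, real_inner_comm r, real_inner_comm p]
  linarith

end Adjoint

lemma hasGradientAt_of_forall_add_inner_le {E : Type*} [NormedAddCommGroup E]
    [InnerProductSpace ℝ E] [CompleteSpace E] {F : E → ℝ} {G : E → E} {L : ℝ}
    (hsub : ∀ p r, F p + ⟪G p, r - p⟫ ≤ F r) (hG : ∀ p q, ‖G p - G q‖ ≤ L * ‖p - q‖) (p : E) :
    HasGradientAt F (G p) p := by
  rw [hasGradientAt_iff_isLittleO]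
  refine (Asymptotics.IsBigO.of_bound L (Eventually.of_forall fun r => ?_)).trans_isLittleO
    (Asymptotics.isLittleO_pow_sub_sub p one_lt_two)
  have hlower := hsub p r
  have hupper := hsub r p
  have hmono : ⟪G r - G p, r - p⟫ ≤ L * ‖r - p‖ ^ 2 := by
    calc ⟪G r - G p, r - p⟫ ≤ ‖G r - G p‖ * ‖r - p‖ := real_inner_le_norm _ _
      _ ≤ L * ‖r - p‖ * ‖r - p‖ := by gcongr; exact hG r p
      _ = L * ‖r - p‖ ^ 2 := by ring
  rw [← neg_sub r p, inner_neg_right] at hupper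
  rw [inner_sub_left] at hmono
  rw [Real.norm_of_nonneg (by linarith), norm_pow, norm_norm]
  linarith

/-- If `f` is ρ-strongly convex for some `ρ > 0`, then the function
`p ↦ f*(A*p)` is differentiable on `ℝ^m`, for each `p ∈ ℝ^m` its gradient equals `A x_{f,p}`
where `x_{f,p}` is the unique minimizer of `x ↦ f(x) − ⟨A*p,x⟩`, and this gradient is Lipschitz
continuous with Lipschitz constant `‖A‖²/ρ`. -/
theorem conjugate_of_strongly_convex_composed_adjoint
    {H : Type*} [NormedAddCommGroup H] [InnerProductSpace ℝ H] [CompleteSpace H]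
    {m : ℕ}
    (f : H → EReal) (ρ : ℝ) (hρ : 0 < ρ)
    (hf_proper_top : ∃ x, f x ≠ ⊤) (hf_proper_bot : ∀ x, f x ≠ ⊥)
    (hf_lsc : LowerSemicontinuous f)
    (hf_strconv : ∀ x y : H, ∀ a b : ℝ, 0 ≤ a → 0 ≤ b → a + b = 1 →
      f (a • x + b • y) - ((ρ / 2 * ‖a • x + b • y‖ ^ 2 : ℝ) : EReal) ≤
        (a : EReal) * (f x - ((ρ / 2 * ‖x‖ ^ 2 : ℝ) : EReal)) +
        (b : EReal) * (f y - ((ρ / 2 * ‖y‖ ^ 2 : ℝ) : EReal)))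
    (A : H →L[ℝ] EuclideanSpace ℝ (Fin m))
    (F : EuclideanSpace ℝ (Fin m) → ℝ)
    (hF : ∀ p : EuclideanSpace ℝ (Fin m),
      (F p : EReal) = ⨆ x : H, ((⟪ContinuousLinearMap.adjoint A p, x⟫ : ℝ) : EReal) - f x) :
    (∀ p : EuclideanSpace ℝ (Fin m), ∃! xf : H,
      ∀ x : H, f xf - ((⟪ContinuousLinearMap.adjoint A p, xf⟫ : ℝ) : EReal) ≤
        f x - ((⟪ContinuousLinearMap.adjoint A p, x⟫ : ℝ) : EReal)) ∧
    (∀ (p : EuclideanSpace ℝ (Fin m)) (xf : H),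
      (∀ x : H, f xf - ((⟪ContinuousLinearMap.adjoint A p, xf⟫ : ℝ) : EReal) ≤
        f x - ((⟪ContinuousLinearMap.adjoint A p, x⟫ : ℝ) : EReal)) →
      HasGradientAt F (A xf) p) ∧
    (∀ (p q : EuclideanSpace ℝ (Fin m)) (xfp xfq : H),
      (∀ x : H, f xfp - ((⟪ContinuousLinearMap.adjoint A p, xfp⟫ : ℝ) : EReal) ≤
        f x - ((⟪ContinuousLinearMap.adjoint A p, x⟫ : ℝ) : EReal)) →
      (∀ x : H, f xfq - ((⟪ContinuousLinearMap.adjoint A q, xfq⟫ : ℝ) : EReal) ≤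
        f x - ((⟪ContinuousLinearMap.adjoint A q, x⟫ : ℝ) : EReal)) →
      ‖A xfp - A xfq‖ ≤ ‖A‖ ^ 2 / ρ * ‖p - q‖) := by
  have hg := strongConvexOn_toReal hf_proper_bot hf_strconv
  have hmin := forall_sub_inner_le_iff_isMinOn hf_proper_bot hf_proper_top
  have hglb := fun p => isGLB_toReal_sub_inner hf_proper_bot (hF p)
  have hexists := fun p => (hg.sub_inner (A.adjoint p)).exists_isMinOn hρ
    (isClosed_sublevel_toReal_sub_inner hf_proper_bot hf_lsc _) hf_proper_top (hglb p).bddBelow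
  choose x hxs hxmin using hexists
  have hunique : ∀ p x₀, (∀ x, f x₀ - ((⟪A.adjoint p, x₀⟫ : ℝ) : EReal) ≤
      f x - ((⟪A.adjoint p, x⟫ : ℝ) : EReal)) → x₀ = x p := fun p x₀ h₀ =>
    (hg.sub_inner _).eq_of_isMinOn hρ ((hmin _ _).1 h₀).1 (hxs p) ((hmin _ _).1 h₀).2 (hxmin p)
  have hlip : ∀ p q, ‖A (x p) - A (x q)‖ ≤ ‖A‖ ^ 2 / ρ * ‖p - q‖ := fun p q =>
    hg.norm_map_sub_map_le_of_isMinOn hρ (hxs p) (hxs q) (hxmin p) (hxmin q)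
  refine ⟨fun p => ⟨x p, (hmin _ _).2 ⟨hxs p, hxmin p⟩, hunique p⟩, fun p x₀ h₀ => ?_,
    fun p q x₀ x₁ h₀ h₁ => ?_⟩
  · rw [hunique p x₀ h₀]
    exact hasGradientAt_of_forall_add_inner_le
      (fun p => add_inner_le_of_isMinOn_sub_inner_adjoint hglb (hxs p) (hxmin p)) hlip p
  · rw [hunique p x₀ h₀, hunique q x₁ h₁]
    exact hlip p q
end

section
/- Let F: ℝ^m → ℝ be convex, κ, L > 0, set F_κ(p) = F(p) + (κ/2)‖p‖², and let p̂ be a minimizer of F_κ. Suppose (p_k)_{k ≥ 0} ⊆ ℝ^m with p_0 = 0 satisfies, for all k ≥ 0: (i) F_κ(p_k) − F_κ(p̂) ≤ ( F_κ(0) − F_κ(p̂) + (κ/2)‖p̂‖² ) e^{−k√(κ/L)} and (ii) ‖p_k − p̂‖ ≤ ‖p̂‖. Then for all k ≥ 0 one has F(p_k) − F(p̂) ≤ (25/8)( F(0) − F(p̂) ) e^{−(k/2)√(κ/L)}. -/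
/-!
Adding `(κ/2)‖·‖²` to a convex `F` makes it `κ`-strongly convex, so `F_κ` grows quadratically
away from its minimizer `p̂`. At `q = 0` this gives `κ‖p̂‖² ≤ D := F(0) − F(p̂)`, and together with
(i) it gives `(κ/2)‖p_k − p̂‖² ≤ D e^{−k√(κ/L)} = D E²`. Then
`F(p_k) − F(p̂) = [F_κ(p_k) − F_κ(p̂)] + (κ/2)(‖p̂‖² − ‖p_k‖²) ≤ D E² + κ‖p̂‖‖p_k − p̂‖`,
and the cross term is at most `(3/2) D E` by AM–GM with weight `E`, for a total of `(5/2) D E`.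
-/

open Filter Topology

theorem norm_sq_sub_norm_sq_le {E : Type*} [SeminormedAddCommGroup E] (x y : E) :
    ‖x‖ ^ 2 - ‖y‖ ^ 2 ≤ 2 * ‖x‖ * ‖y - x‖ := by
  have h : ‖x‖ - ‖y‖ ≤ ‖y - x‖ := norm_sub_rev y x ▸ norm_sub_norm_le x y
  rcases le_total ‖x‖ ‖y‖ with hxy | hyx
  · nlinarith [norm_nonneg x, norm_nonneg (y - x)]
  · nlinarith [mul_le_mul_of_nonneg_right h (add_nonneg (norm_nonneg x) (norm_nonneg y))]

section StrongConvexity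

variable {E : Type*} [NormedAddCommGroup E] [InnerProductSpace ℝ E]

theorem ConvexOn.strongConvexOn_add_sq_norm {s : Set E} {f : E → ℝ} (hf : ConvexOn ℝ s f)
    (m : ℝ) : StrongConvexOn s m fun x ↦ f x + m / 2 * ‖x‖ ^ 2 :=
  strongConvexOn_iff_convex.2 (by simpa using hf)

theorem StrongConvexOn.sq_norm_sub_le_of_isMinOn {s : Set E} {m : ℝ} {g : E → ℝ} {x y : E}
    (hg : StrongConvexOn s m g) (hmin : IsMinOn g s x) (hx : x ∈ s) (hy : y ∈ s) :
    m / 2 * ‖y - x‖ ^ 2 ≤ g y - g x := by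
  have hseg : ∀ t ∈ Set.Ioo (0 : ℝ) 1, (1 - t) * (m / 2 * ‖y - x‖ ^ 2) ≤ g y - g x := by
    rintro t ⟨ht0, ht1⟩
    have hconv := hg.2 hx hy (sub_nonneg.2 ht1.le) ht0.le (sub_add_cancel 1 t)
    have hle := isMinOn_iff.1 hmin _ (hg.1 hx hy (sub_nonneg.2 ht1.le) ht0.le (sub_add_cancel 1 t))
    rw [smul_eq_mul, smul_eq_mul, norm_sub_rev] at hconv
    nlinarith
  have hlim : Tendsto (fun t : ℝ ↦ (1 - t) * (m / 2 * ‖y - x‖ ^ 2)) (𝓝[>] 0)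
      (𝓝 (m / 2 * ‖y - x‖ ^ 2)) := by
    have : Continuous fun t : ℝ ↦ (1 - t) * (m / 2 * ‖y - x‖ ^ 2) := by fun_prop
    simpa using this.continuousWithinAt.tendsto (x := 0) (s := Set.Ioi 0)
  exact le_of_tendsto hlim (mem_of_superset (Ioo_mem_nhdsGT one_pos) hseg)

end StrongConvexity

theorem fast_gradient_unregularized_objective_decrease_general
    {m : ℕ} (F : EuclideanSpace ℝ (Fin m) → ℝ)
    (hF : ConvexOn ℝ Set.univ F)
    (κ L : ℝ) (hκ : 0 < κ)
    (phat : EuclideanSpace ℝ (Fin m))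
    (hmin : ∀ q : EuclideanSpace ℝ (Fin m),
      F phat + κ / 2 * ‖phat‖ ^ 2 ≤ F q + κ / 2 * ‖q‖ ^ 2)
    (p : ℕ → EuclideanSpace ℝ (Fin m))
    (hi : ∀ k : ℕ,
      (F (p k) + κ / 2 * ‖p k‖ ^ 2) - (F phat + κ / 2 * ‖phat‖ ^ 2) ≤
        ((F 0 + κ / 2 * ‖(0 : EuclideanSpace ℝ (Fin m))‖ ^ 2) -
          (F phat + κ / 2 * ‖phat‖ ^ 2) + κ / 2 * ‖phat‖ ^ 2) *
          Real.exp (-(k : ℝ) * Real.sqrt (κ / L))) :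
    ∀ k : ℕ, F (p k) - F phat ≤
      25 / 8 * (F 0 - F phat) * Real.exp (-((k : ℝ) / 2) * Real.sqrt (κ / L)) := by
  intro k
  have growth (q : EuclideanSpace ℝ (Fin m)) :
      κ / 2 * ‖q - phat‖ ^ 2 ≤ (F q + κ / 2 * ‖q‖ ^ 2) - (F phat + κ / 2 * ‖phat‖ ^ 2) :=
    (hF.strongConvexOn_add_sq_norm κ).sq_norm_sub_le_of_isMinOn (fun q _ ↦ hmin q) trivial trivial
  set D := F 0 - F phat
  set E := Real.exp (-((k : ℝ) / 2) * Real.sqrt (κ / L))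
  have hphat : κ * ‖phat‖ ^ 2 ≤ D := by
    have := growth 0
    simp only [zero_sub, norm_neg, norm_zero] at this
    linarith
  have hD : 0 ≤ D := (by positivity : 0 ≤ κ * ‖phat‖ ^ 2).trans hphat
  have hE : 0 < E ∧ E ≤ 1 := ⟨Real.exp_pos _, Real.exp_le_one_iff.2 <|
    mul_nonpos_of_nonpos_of_nonneg (neg_nonpos.2 (by positivity)) (Real.sqrt_nonneg _)⟩
  have hdecay : (F (p k) + κ / 2 * ‖p k‖ ^ 2) - (F phat + κ / 2 * ‖phat‖ ^ 2) ≤ D * E ^ 2 := by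
    convert hi k using 2
    · rw [norm_zero]; ring
    · rw [← Real.exp_nat_mul]; ring_nf
  have hdist : κ / 2 * ‖p k - phat‖ ^ 2 ≤ D * E ^ 2 := (growth (p k)).trans hdecay
  -- AM–GM with weight `E`: `2E·κ‖p̂‖‖p_k − p̂‖ ≤ κ(E‖p̂‖)² + κ‖p_k − p̂‖² ≤ 3 D E²`.
  have hcross : κ * ‖phat‖ * ‖p k - phat‖ ≤ 3 / 2 * D * E := by
    nlinarith [mul_nonneg hκ.le (sq_nonneg (E * ‖phat‖ - ‖p k - phat‖))]
  calc F (p k) - F phat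
      = ((F (p k) + κ / 2 * ‖p k‖ ^ 2) - (F phat + κ / 2 * ‖phat‖ ^ 2))
        + κ / 2 * (‖phat‖ ^ 2 - ‖p k‖ ^ 2) := by ring
    _ ≤ D * E ^ 2 + κ * ‖phat‖ * ‖p k - phat‖ := by
        nlinarith [norm_sq_sub_norm_sq_le phat (p k)]
    _ ≤ 25 / 8 * D * E := by nlinarith [mul_le_mul_of_nonneg_left hE.2 (mul_nonneg hD hE.1.le)]

/-- Let `F : ℝ^m → ℝ` be convex, `κ, L > 0`, set `F_κ(p) = F(p) + (κ/2)‖p‖²`,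
and let `phat` be a minimizer of `F_κ`. Suppose `(p_k)` with `p_0 = 0` satisfies, for all `k`:
(i) `F_κ(p_k) − F_κ(phat) ≤ (F_κ(0) − F_κ(phat) + (κ/2)‖phat‖²) e^{−k√(κ/L)}` and
(ii) `‖p_k − phat‖ ≤ ‖phat‖`. Then for all `k`:
`F(p_k) − F(phat) ≤ (25/8)(F(0) − F(phat)) e^{−(k/2)√(κ/L)}`. -/
theorem fast_gradient_unregularized_objective_decrease
    {m : ℕ} (F : EuclideanSpace ℝ (Fin m) → ℝ)
    (hF : ConvexOn ℝ Set.univ F)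
    (κ L : ℝ) (hκ : 0 < κ) (hL : 0 < L)
    (phat : EuclideanSpace ℝ (Fin m))
    (hmin : ∀ q : EuclideanSpace ℝ (Fin m),
      F phat + κ / 2 * ‖phat‖ ^ 2 ≤ F q + κ / 2 * ‖q‖ ^ 2)
    (p : ℕ → EuclideanSpace ℝ (Fin m)) (hp0 : p 0 = 0)
    (hi : ∀ k : ℕ,
      (F (p k) + κ / 2 * ‖p k‖ ^ 2) - (F phat + κ / 2 * ‖phat‖ ^ 2) ≤
        ((F 0 + κ / 2 * ‖(0 : EuclideanSpace ℝ (Fin m))‖ ^ 2) -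
          (F phat + κ / 2 * ‖phat‖ ^ 2) + κ / 2 * ‖phat‖ ^ 2) *
          Real.exp (-(k : ℝ) * Real.sqrt (κ / L)))
    (hii : ∀ k : ℕ, ‖p k - phat‖ ≤ ‖phat‖) :
    ∀ k : ℕ, F (p k) - F phat ≤
      25 / 8 * (F 0 - F phat) * Real.exp (-((k : ℝ) / 2) * Real.sqrt (κ / L)) :=
  fast_gradient_unregularized_objective_decrease_general F hF κ L hκ phat hmin p hi
end

section
/- Let θ, θ_ρ: ℝ^m → ℝ with θ_ρ convex satisfy θ_ρ(p) ≤ θ(p) ≤ θ_ρ(p) + ρ D_f for all p ∈ ℝ^m, where ρ > 0 and D_f ≥ 0. Let κ, L > 0, set θ_{ρ,κ}(p) = θ_ρ(p) + (κ/2)‖p‖², let p̂ be a minimizer of θ_{ρ,κ}, and let p* be a minimizer of θ with ‖p*‖ ≤ R. Suppose (p_k)_{k ≥ 0} ⊆ ℝ^m with p_0 = 0 satisfies, for all k ≥ 0: (i) θ_{ρ,κ}(p_k) − θ_{ρ,κ}(p̂) ≤ ( θ_{ρ,κ}(0) − θ_{ρ,κ}(p̂) + (κ/2)‖p̂‖²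 ) e^{−k√(κ/L)} and (ii) ‖p_k − p̂‖ ≤ ‖p̂‖. Then for all k ≥ 0: θ(p_k) − θ(p*) ≤ ρ D_f + (κ/2) R² + (25/8)( θ(0) − θ(p*) + ρ D_f ) e^{−(k/2)√(κ/L)}. -/
/-!
Write `Θ q = θρ q + (κ/2)‖q‖²`. The upper sandwich bound gives `θ (p k) ≤ Θ (p k) + ρ Df`, the
rate (i) bounds `Θ (p k) - Θ phat` by `(θρ 0 - θρ phat) e^{-k√(κ/L)}`, and minimality of `phat`
gives `Θ phat ≤ Θ pstar ≤ θ pstar + (κ/2) R²`. The initial gap `θρ 0 - θρ phat` is nonnegative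
(compare `Θ phat ≤ Θ 0`) and at most `θ 0 - θ pstar + ρ Df` by the sandwich, and
`e^{-k√(κ/L)} ≤ e^{-(k/2)√(κ/L)}`.
-/

open Real

section Smoothing

variable {E : Type*} {θ θρ : E → ℝ}

theorem sub_le_sub_add_of_sandwich {ε : ℝ} (hsand : ∀ p, θρ p ≤ θ p ∧ θ p ≤ θρ p + ε)
    {pstar : E} (hpstar : ∀ p, θ pstar ≤ θ p) (x y : E) :
    θρ x - θρ y ≤ θ x - θ pstar + ε := by
  linarith [(hsand x).1, (hsand y).2, hpstar y]

theorem regularized_min_le_of_le [SeminormedAddCommGroup E] {κ R : ℝ} (hκ : 0 ≤ κ)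
    (hle : ∀ p, θρ p ≤ θ p) {phat : E}
    (hphat : ∀ q, θρ phat + κ / 2 * ‖phat‖ ^ 2 ≤ θρ q + κ / 2 * ‖q‖ ^ 2)
    {pstar : E} (hR : ‖pstar‖ ≤ R) :
    θρ phat + κ / 2 * ‖phat‖ ^ 2 ≤ θ pstar + κ / 2 * R ^ 2 := by
  have hnorm : κ / 2 * ‖pstar‖ ^ 2 ≤ κ / 2 * R ^ 2 := by
    gcongr
  linarith [hphat pstar, hle pstar]

theorem sub_nonneg_of_regularized_min [SeminormedAddCommGroup E] {κ : ℝ} (hκ : 0 ≤ κ)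
    {phat : E} (hphat : ∀ q, θρ phat + κ / 2 * ‖phat‖ ^ 2 ≤ θρ q + κ / 2 * ‖q‖ ^ 2) :
    0 ≤ θρ 0 - θρ phat := by
  have h0 := hphat 0
  rw [norm_zero] at h0
  nlinarith [sq_nonneg ‖phat‖]

end Smoothing

theorem exp_neg_mul_le_exp_neg_half_mul {k s : ℝ} (hk : 0 ≤ k) (hs : 0 ≤ s) :
    exp (-k * s) ≤ exp (-(k / 2) * s) :=
  exp_le_exp.mpr (by nlinarith)

theorem dual_objective_convergence_estimate_general
    {m : ℕ} (θ θρ : EuclideanSpace ℝ (Fin m) → ℝ)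
    (ρ Df : ℝ)
    (hsand : ∀ p : EuclideanSpace ℝ (Fin m), θρ p ≤ θ p ∧ θ p ≤ θρ p + ρ * Df)
    (κ L : ℝ) (hκ : 0 < κ)
    (phat : EuclideanSpace ℝ (Fin m))
    (hphat : ∀ q : EuclideanSpace ℝ (Fin m),
      θρ phat + κ / 2 * ‖phat‖ ^ 2 ≤ θρ q + κ / 2 * ‖q‖ ^ 2)
    (R : ℝ) (pstar : EuclideanSpace ℝ (Fin m))
    (hpstar : ∀ p : EuclideanSpace ℝ (Fin m), θ pstar ≤ θ p)
    (hR : ‖pstar‖ ≤ R)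
    (p : ℕ → EuclideanSpace ℝ (Fin m))
    (hi : ∀ k : ℕ,
      (θρ (p k) + κ / 2 * ‖p k‖ ^ 2) - (θρ phat + κ / 2 * ‖phat‖ ^ 2) ≤
        ((θρ 0 + κ / 2 * ‖(0 : EuclideanSpace ℝ (Fin m))‖ ^ 2) -
          (θρ phat + κ / 2 * ‖phat‖ ^ 2) + κ / 2 * ‖phat‖ ^ 2) *
          Real.exp (-(k : ℝ) * Real.sqrt (κ / L))) :
    ∀ k : ℕ, θ (p k) - θ pstar ≤
      ρ * Df + κ / 2 * R ^ 2 +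
        25 / 8 * (θ 0 - θ pstar + ρ * Df) *
          Real.exp (-((k : ℝ) / 2) * Real.sqrt (κ / L)) := by
  intro k
  set s := √(κ / L)
  have hrate : θρ (p k) + κ / 2 * ‖p k‖ ^ 2 - (θρ phat + κ / 2 * ‖phat‖ ^ 2) ≤
      (θρ 0 - θρ phat) * exp (-(k : ℝ) * s) :=
    (hi k).trans_eq (by rw [norm_zero]; ring)
  have hgap := sub_le_sub_add_of_sandwich hsand hpstar 0 phat
  have hgap_nonneg := sub_nonneg_of_regularized_min hκ.le hphat
  have hmin := regularized_min_le_of_le hκ.le (fun q => (hsand q).1) hphat hR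
  have hexp := exp_neg_mul_le_exp_neg_half_mul k.cast_nonneg (sqrt_nonneg (κ / L))
  have hdecay : (θρ 0 - θρ phat) * exp (-(k : ℝ) * s) ≤
      (θ 0 - θ pstar + ρ * Df) * exp (-((k : ℝ) / 2) * s) :=
    mul_le_mul hgap hexp (exp_pos _).le (hgap_nonneg.trans hgap)
  have hslack : 0 ≤ (θ 0 - θ pstar + ρ * Df) * exp (-((k : ℝ) / 2) * s) :=
    mul_nonneg (hgap_nonneg.trans hgap) (exp_pos _).le
  have hreg : 0 ≤ κ / 2 * ‖p k‖ ^ 2 := by positivity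
  linarith [(hsand (p k)).2]

/-- Let `θ, θ_ρ : ℝ^m → ℝ` with `θ_ρ` convex satisfy
`θ_ρ(p) ≤ θ(p) ≤ θ_ρ(p) + ρ D_f` for all `p`, where `ρ > 0` and `D_f ≥ 0`. Let `κ, L > 0`,
set `θ_{ρ,κ}(p) = θ_ρ(p) + (κ/2)‖p‖²`, let `phat` be a minimizer of `θ_{ρ,κ}`, and let
`pstar` be a minimizer of `θ` with `‖pstar‖ ≤ R`. Suppose `(p_k)` with `p_0 = 0` satisfies,
for all `k`: (i) `θ_{ρ,κ}(p_k) − θ_{ρ,κ}(phat) ≤ (θ_{ρ,κ}(0) − θ_{ρ,κ}(phat) +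
(κ/2)‖phat‖²) e^{−k√(κ/L)}` and (ii) `‖p_k − phat‖ ≤ ‖phat‖`. Then for all `k`:
`θ(p_k) − θ(pstar) ≤ ρ D_f + (κ/2) R² + (25/8)(θ(0) − θ(pstar) + ρ D_f) e^{−(k/2)√(κ/L)}`. -/
theorem dual_objective_convergence_estimate
    {m : ℕ} (θ θρ : EuclideanSpace ℝ (Fin m) → ℝ)
    (hθρ_convex : ConvexOn ℝ Set.univ θρ)
    (ρ Df : ℝ) (hρ : 0 < ρ) (hDf : 0 ≤ Df)
    (hsand : ∀ p : EuclideanSpace ℝ (Fin m), θρ p ≤ θ p ∧ θ p ≤ θρ p + ρ * Df)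
    (κ L : ℝ) (hκ : 0 < κ) (hL : 0 < L)
    (phat : EuclideanSpace ℝ (Fin m))
    (hphat : ∀ q : EuclideanSpace ℝ (Fin m),
      θρ phat + κ / 2 * ‖phat‖ ^ 2 ≤ θρ q + κ / 2 * ‖q‖ ^ 2)
    (R : ℝ) (pstar : EuclideanSpace ℝ (Fin m))
    (hpstar : ∀ p : EuclideanSpace ℝ (Fin m), θ pstar ≤ θ p)
    (hR : ‖pstar‖ ≤ R)
    (p : ℕ → EuclideanSpace ℝ (Fin m)) (hp0 : p 0 = 0)
    (hi : ∀ k : ℕ,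
      (θρ (p k) + κ / 2 * ‖p k‖ ^ 2) - (θρ phat + κ / 2 * ‖phat‖ ^ 2) ≤
        ((θρ 0 + κ / 2 * ‖(0 : EuclideanSpace ℝ (Fin m))‖ ^ 2) -
          (θρ phat + κ / 2 * ‖phat‖ ^ 2) + κ / 2 * ‖phat‖ ^ 2) *
          Real.exp (-(k : ℝ) * Real.sqrt (κ / L)))
    (hii : ∀ k : ℕ, ‖p k - phat‖ ≤ ‖phat‖) :
    ∀ k : ℕ, θ (p k) - θ pstar ≤
      ρ * Df + κ / 2 * R ^ 2 +
        25 / 8 * (θ 0 - θ pstar + ρ * Df) *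
          Real.exp (-((k : ℝ) / 2) * Real.sqrt (κ / L)) :=
  dual_objective_convergence_estimate_general θ θρ ρ Df hsand κ L hκ phat hphat R pstar hpstar hR p
    hi
end

section
/- Let φ, θ: ℝ^m → ℝ and c ≥ 0 satisfy φ(p) ≤ θ(p) ≤ φ(p) + c for all p ∈ ℝ^m, let κ > 0, let p̂ be a minimizer of p ↦ φ(p) + (κ/2)‖p‖², and let p* be a minimizer of θ. Then ‖p̂‖² ≤ ‖p*‖² + 2c/κ. -/
/-!
Evaluating the optimality of `phat` at `pstar` and chaining
`φ pstar ≤ θ pstar ≤ θ phat ≤ φ phat + c` cancels the `φ`-terms, leaving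
`(κ/2)‖phat‖² ≤ (κ/2)‖pstar‖² + c`.
-/

lemma regularizer_le_of_isMin_add_of_isMin {α : Type*} (φ θ R : α → ℝ) (c : ℝ)
    (hsand : ∀ p, φ p ≤ θ p ∧ θ p ≤ φ p + c)
    (phat : α) (hphat : ∀ p, φ phat + R phat ≤ φ p + R p)
    (pstar : α) (hpstar : ∀ p, θ pstar ≤ θ p) :
    R phat ≤ R pstar + c := by
  have hφ : φ pstar ≤ φ phat + c :=
    calc φ pstar ≤ θ pstar := (hsand pstar).1
      _ ≤ θ phat := hpstar phat
      _ ≤ φ phat + c := (hsand phat).2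
  linarith [hphat pstar]

theorem regularized_minimizer_norm_bound_general
    {m : ℕ} (φ θ : EuclideanSpace ℝ (Fin m) → ℝ)
    (c : ℝ)
    (hsand : ∀ p : EuclideanSpace ℝ (Fin m), φ p ≤ θ p ∧ θ p ≤ φ p + c)
    (κ : ℝ) (hκ : 0 < κ)
    (phat : EuclideanSpace ℝ (Fin m))
    (hphat : ∀ p : EuclideanSpace ℝ (Fin m),
      φ phat + κ / 2 * ‖phat‖ ^ 2 ≤ φ p + κ / 2 * ‖p‖ ^ 2)
    (pstar : EuclideanSpace ℝ (Fin m))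
    (hpstar : ∀ p : EuclideanSpace ℝ (Fin m), θ pstar ≤ θ p) :
    ‖phat‖ ^ 2 ≤ ‖pstar‖ ^ 2 + 2 * c / κ := by
  have h := regularizer_le_of_isMin_add_of_isMin φ θ (fun p => κ / 2 * ‖p‖ ^ 2) c
    hsand phat hphat pstar hpstar
  rw [← sub_le_iff_le_add', le_div_iff₀ hκ]
  linarith

/-- Let `φ, θ : ℝ^m → ℝ` and `c ≥ 0` satisfy `φ(p) ≤ θ(p) ≤ φ(p) + c` for all
`p`, let `κ > 0`, let `phat` be a minimizer of `p ↦ φ(p) + (κ/2)‖p‖²`, and let `pstar` be a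
minimizer of `θ`. Then `‖phat‖² ≤ ‖pstar‖² + 2c/κ`. -/
theorem regularized_minimizer_norm_bound
    {m : ℕ} (φ θ : EuclideanSpace ℝ (Fin m) → ℝ)
    (c : ℝ) (hc : 0 ≤ c)
    (hsand : ∀ p : EuclideanSpace ℝ (Fin m), φ p ≤ θ p ∧ θ p ≤ φ p + c)
    (κ : ℝ) (hκ : 0 < κ)
    (phat : EuclideanSpace ℝ (Fin m))
    (hphat : ∀ p : EuclideanSpace ℝ (Fin m),
      φ phat + κ / 2 * ‖phat‖ ^ 2 ≤ φ p + κ / 2 * ‖p‖ ^ 2)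
    (pstar : EuclideanSpace ℝ (Fin m))
    (hpstar : ∀ p : EuclideanSpace ℝ (Fin m), θ pstar ≤ θ p) :
    ‖phat‖ ^ 2 ≤ ‖pstar‖ ^ 2 + 2 * c / κ :=
  regularized_minimizer_norm_bound_general φ θ c hsand κ hκ phat hphat pstar hpstar
end

section
/- Let θ, θ_ρ: ℝ^m → ℝ with θ_ρ convex and differentiable satisfy θ_ρ(p) ≤ θ(p) ≤ θ_ρ(p) + ρ D_f for all p ∈ ℝ^m, let ε > 0, D_f > 0, R > 0, ρ = ε/(3 D_f), κ = 2ε/(3 R²), L > 0, set θ_{ρ,κ}(p) = θ_ρ(p) + (κ/2)‖p‖², let p̂ be a minimizer of θ_{ρ,κ}, and let p* be a minimizer of θ with ‖p*‖ ≤ R. Suppose (p_k)_{k ≥ 0} ⊆ ℝ^m with p_0 = 0 satisfies, for all k ≥ 0: (i) ‖∇θ_{ρ,κ}(p_k)‖² ≤ 4L ( θ_{ρ,κ}(0) − θ_{ρ,κ}(p̂) ) e^{−k√(κ/L)} and (ii) ‖p_k − p̂‖ ≤ ‖p̂‖. Then for all k ≥ 0: ‖∇θ_ρ(p_k)‖ ≤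 2 √( L ( θ(0) − θ(p*) + ε/3 ) ) e^{−(k/2)√(κ/L)} + 4√2 ε/(3R). -/
/-!
Comparing the two minimizers through the sandwich `θ_ρ ≤ θ ≤ θ_ρ + ε/3` bounds the optimality
gap of `θ_{ρ,κ}` at `0` by `θ(0) − θ(p*) + ε/3`, and gives `κ‖p̂‖² ≤ κ‖p*‖² + 2ε/3 ≤ 2κR²`.
Then (i) bounds `‖∇θ_ρ(p_k) + κ p_k‖`, while (ii) gives `‖p_k‖ ≤ 2‖p̂‖ ≤ 2√2 R`, so the
regularization term `κ p_k` costs at most `2√2 κ R = 4√2 ε/(3R)`.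
-/

open Real

section Regularized

variable {E : Type*} [SeminormedAddCommGroup E] {f g : E → ℝ} {δ κ : ℝ} {phat pstar : E}

theorem regularized_minimizer_norm_sq_le (hfg : ∀ p, f p ≤ g p ∧ g p ≤ f p + δ)
    (hphat : ∀ q, f phat + κ / 2 * ‖phat‖ ^ 2 ≤ f q + κ / 2 * ‖q‖ ^ 2)
    (hpstar : ∀ p, g pstar ≤ g p) :
    κ * ‖phat‖ ^ 2 ≤ κ * ‖pstar‖ ^ 2 + 2 * δ := by
  linarith [hphat pstar, (hfg pstar).1, (hfg phat).2, hpstar phat]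

theorem regularized_gap_le (hκ : 0 ≤ κ) (hfg : ∀ p, f p ≤ g p ∧ g p ≤ f p + δ)
    (hpstar : ∀ p, g pstar ≤ g p) (x : E) :
    (f x + κ / 2 * ‖x‖ ^ 2) - (f phat + κ / 2 * ‖phat‖ ^ 2) ≤
      g x - g pstar + δ + κ / 2 * ‖x‖ ^ 2 := by
  have : 0 ≤ κ / 2 * ‖phat‖ ^ 2 := by positivity
  linarith [(hfg x).1, (hfg phat).2, hpstar phat]

end Regularized

theorem abs_le_two_mul_sqrt_mul_exp_half_of_sq_le {x c t : ℝ} (h : x ^ 2 ≤ 4 * c * exp t) :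
    |x| ≤ 2 * √c * exp (t / 2) :=
  calc |x| ≤ √(4 * c * exp t) := abs_le_sqrt h
    _ = 2 * √c * exp (t / 2) := by
      rw [sqrt_mul' _ (exp_pos t).le, sqrt_mul zero_le_four, exp_half,
        show (4 : ℝ) = 2 ^ 2 by norm_num, sqrt_sq zero_le_two]

theorem norm_le_norm_add_smul_add_mul_norm {E : Type*} [SeminormedAddCommGroup E]
    [NormedSpace ℝ E] {κ : ℝ} (hκ : 0 ≤ κ) (v p : E) :
    ‖v‖ ≤ ‖v + κ • p‖ + κ * ‖p‖ := by
  calc ‖v‖ = ‖(v + κ • p) - κ • p‖ := by rw [add_sub_cancel_right]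
    _ ≤ ‖v + κ • p‖ + ‖κ • p‖ := norm_sub_le _ _
    _ = ‖v + κ • p‖ + κ * ‖p‖ := by rw [norm_smul, Real.norm_of_nonneg hκ]

theorem gradient_norm_convergence_estimate_general
    {m : ℕ} (θ θρ : EuclideanSpace ℝ (Fin m) → ℝ)
    (Gρ : EuclideanSpace ℝ (Fin m) → EuclideanSpace ℝ (Fin m))
    (ε Df R ρ κ L : ℝ) (hε : 0 < ε) (hDf : 0 < Df) (hR : 0 < R)
    (hρ : ρ = ε / (3 * Df)) (hκ : κ = 2 * ε / (3 * R ^ 2)) (hL : 0 < L)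
    (hsand : ∀ p : EuclideanSpace ℝ (Fin m), θρ p ≤ θ p ∧ θ p ≤ θρ p + ρ * Df)
    (phat : EuclideanSpace ℝ (Fin m))
    (hphat : ∀ q : EuclideanSpace ℝ (Fin m),
      θρ phat + κ / 2 * ‖phat‖ ^ 2 ≤ θρ q + κ / 2 * ‖q‖ ^ 2)
    (pstar : EuclideanSpace ℝ (Fin m))
    (hpstar : ∀ p : EuclideanSpace ℝ (Fin m), θ pstar ≤ θ p)
    (hRstar : ‖pstar‖ ≤ R)
    (p : ℕ → EuclideanSpace ℝ (Fin m))
    (hi : ∀ k : ℕ,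
      ‖Gρ (p k) + κ • p k‖ ^ 2 ≤
        4 * L * ((θρ 0 + κ / 2 * ‖(0 : EuclideanSpace ℝ (Fin m))‖ ^ 2) -
          (θρ phat + κ / 2 * ‖phat‖ ^ 2)) * Real.exp (-(k : ℝ) * Real.sqrt (κ / L)))
    (hii : ∀ k : ℕ, ‖p k - phat‖ ≤ ‖phat‖) :
    ∀ k : ℕ, ‖Gρ (p k)‖ ≤
      2 * Real.sqrt (L * (θ 0 - θ pstar + ε / 3)) *
        Real.exp (-((k : ℝ) / 2) * Real.sqrt (κ / L)) +
      4 * Real.sqrt 2 * ε / (3 * R) := by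
  intro k
  have hκ0 : 0 < κ := by rw [hκ]; positivity
  have hδ : ρ * Df = ε / 3 := by rw [hρ]; field_simp
  have hgap := regularized_gap_le (phat := phat) hκ0.le hsand hpstar 0
  have hphat_norm : ‖phat‖ ≤ √2 * R := by
    have hpstar_sq : κ * ‖pstar‖ ^ 2 ≤ κ * R ^ 2 := by gcongr
    have hκR : κ * R ^ 2 = 2 * ε / 3 := by rw [hκ]; field_simp
    have hphat_sq : ‖phat‖ ^ 2 ≤ (√2 * R) ^ 2 := by
      rw [mul_pow, sq_sqrt zero_le_two]
      refine le_of_mul_le_mul_left ?_ hκ0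
      linarith [regularized_minimizer_norm_sq_le hsand hphat hpstar]
    simpa using abs_le_of_sq_le_sq hphat_sq (by positivity)
  have hreg : ‖Gρ (p k) + κ • p k‖ ≤
      2 * √(L * (θ 0 - θ pstar + ε / 3)) * exp (-((k : ℝ) / 2) * √(κ / L)) := by
    rw [show -((k : ℝ) / 2) * √(κ / L) = -(k : ℝ) * √(κ / L) / 2 by ring, ← abs_norm]
    apply abs_le_two_mul_sqrt_mul_exp_half_of_sq_le
    calc _ ≤ _ := hi k
      _ ≤ 4 * (L * (θ 0 - θ pstar + ε / 3)) * exp (-(k : ℝ) * √(κ / L)) := by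
        rw [← mul_assoc]
        gcongr
        simpa only [norm_zero, zero_pow two_ne_zero, mul_zero, add_zero, hδ] using hgap
  have hpk : ‖p k‖ ≤ 2 * (√2 * R) := by linarith [norm_le_insert' (p k) phat, hii k]
  calc ‖Gρ (p k)‖ ≤ ‖Gρ (p k) + κ • p k‖ + κ * ‖p k‖ :=
        norm_le_norm_add_smul_add_mul_norm hκ0.le _ _
    _ ≤ 2 * √(L * (θ 0 - θ pstar + ε / 3)) * exp (-((k : ℝ) / 2) * √(κ / L)) +
        κ * (2 * (√2 * R)) := by gcongr
    _ = _ := by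
      congr 1
      rw [hκ]
      field_simp
      ring

/-- Let `θ, θ_ρ : ℝ^m → ℝ` with `θ_ρ` convex and differentiable satisfy
`θ_ρ(p) ≤ θ(p) ≤ θ_ρ(p) + ρ D_f` for all `p`, let `ε > 0`, `D_f > 0`, `R > 0`,
`ρ = ε/(3 D_f)`, `κ = 2ε/(3 R²)`, `L > 0`, set `θ_{ρ,κ}(p) = θ_ρ(p) + (κ/2)‖p‖²`, let `phat`
be a minimizer of `θ_{ρ,κ}`, and let `pstar` be a minimizer of `θ` with `‖pstar‖ ≤ R`.
Suppose `(p_k)` with `p_0 = 0` satisfies, for all `k`: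
(i) `‖∇θ_{ρ,κ}(p_k)‖² ≤ 4L (θ_{ρ,κ}(0) − θ_{ρ,κ}(phat)) e^{−k√(κ/L)}` (with
`∇θ_{ρ,κ}(p) = ∇θ_ρ(p) + κ p`) and (ii) `‖p_k − phat‖ ≤ ‖phat‖`. Then for all `k`:
`‖∇θ_ρ(p_k)‖ ≤ 2 √(L (θ(0) − θ(pstar) + ε/3)) e^{−(k/2)√(κ/L)} + 4√2 ε/(3R)`. -/
theorem gradient_norm_convergence_estimate
    {m : ℕ} (θ θρ : EuclideanSpace ℝ (Fin m) → ℝ)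
    (hθρ_convex : ConvexOn ℝ Set.univ θρ)
    (Gρ : EuclideanSpace ℝ (Fin m) → EuclideanSpace ℝ (Fin m))
    (hθρ_diff : ∀ p : EuclideanSpace ℝ (Fin m), HasGradientAt θρ (Gρ p) p)
    (ε Df R ρ κ L : ℝ) (hε : 0 < ε) (hDf : 0 < Df) (hR : 0 < R)
    (hρ : ρ = ε / (3 * Df)) (hκ : κ = 2 * ε / (3 * R ^ 2)) (hL : 0 < L)
    (hsand : ∀ p : EuclideanSpace ℝ (Fin m), θρ p ≤ θ p ∧ θ p ≤ θρ p + ρ * Df)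
    (phat : EuclideanSpace ℝ (Fin m))
    (hphat : ∀ q : EuclideanSpace ℝ (Fin m),
      θρ phat + κ / 2 * ‖phat‖ ^ 2 ≤ θρ q + κ / 2 * ‖q‖ ^ 2)
    (pstar : EuclideanSpace ℝ (Fin m))
    (hpstar : ∀ p : EuclideanSpace ℝ (Fin m), θ pstar ≤ θ p)
    (hRstar : ‖pstar‖ ≤ R)
    (p : ℕ → EuclideanSpace ℝ (Fin m)) (hp0 : p 0 = 0)
    (hi : ∀ k : ℕ,
      ‖Gρ (p k) + κ • p k‖ ^ 2 ≤
        4 * L * ((θρ 0 + κ / 2 * ‖(0 : EuclideanSpace ℝ (Fin m))‖ ^ 2) -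
          (θρ phat + κ / 2 * ‖phat‖ ^ 2)) * Real.exp (-(k : ℝ) * Real.sqrt (κ / L)))
    (hii : ∀ k : ℕ, ‖p k - phat‖ ≤ ‖phat‖) :
    ∀ k : ℕ, ‖Gρ (p k)‖ ≤
      2 * Real.sqrt (L * (θ 0 - θ pstar + ε / 3)) *
        Real.exp (-((k : ℝ) / 2) * Real.sqrt (κ / L)) +
      4 * Real.sqrt 2 * ε / (3 * R) :=
  gradient_norm_convergence_estimate_general θ θρ Gρ ε Df R ρ κ L hε hDf hR hρ hκ hL hsand phat
    hphat pstar hpstar hRstar p hi hii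
end

section
/- Let ε > 0, R > 0, D_f = sup{ ‖x‖²/2 : x ∈ dom f }, ρ = ε/(3 D_f), and let p* be a minimizer of the dual objective θ(p) = f*(A*p) + g*(−p), so that v(D) = −θ(p*). For p ∈ ℝ^m, let x_{f,p} ∈ H be the unique maximizer of x ↦ ⟨A*p,x⟩ − f(x) − (ρ/2)‖x‖², let x_{g,p} ∈ ℝ^m be the unique minimizer of x ↦ ⟨p,x⟩ + g(x), and set θ_ρ(p) = f_ρ*(A*p) + g*(−p) where f_ρ*(A*p) = ⟨A*p, x_{f,p}⟩ − f(x_{f,p}) − (ρ/2)‖x_{f,p}‖². If p ∈ ℝ^m satisfies 0 ≤ θ(p) − θ(p*) ≤ ε, ‖A x_{f,p} − x_{g,p}‖ ≤ 2ε/R and ‖p‖ ≤ 2√2 R, then | f(x_{f,p}) + g(x_{g,p}) − v(D) | ≤ 2(2√2 + 1) ε. -/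
open scoped RealInnerProductSpace

/-!
Write `f*` and `g*` for the Fenchel conjugates, so that `θ p = f*(A† p) + g*(-p)`. Since `x_{g,p}`
minimizes `⟨p, ·⟩ + g`, the conjugate `g*(-p)` is attained there, while `f*(A† p)` exceeds the
value `⟨A† p, x_{f,p}⟩ - f(x_{f,p})` by at most the smoothing error `ρ D_f ≤ ε/3`. Hence
`f(x_{f,p}) + g(x_{g,p}) - v(D)` is, up to `ε/3`, the sum of `θ(p*) - θ(p) ∈ [-ε, 0]` and
`⟨p, A x_{f,p} - x_{g,p}⟩`, which Cauchy–Schwarz bounds by `‖p‖ · 2ε/R ≤ 4√2 ε`.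
-/

namespace EReal

theorem iSup_coe_sub_le {X : Type*} {F : X → EReal} (hF : ∀ x, F x ≠ ⊥) {φ : X → ℝ} {c : ℝ}
    (h : ∀ x, F x ≠ ⊤ → φ x - (F x).toReal ≤ c) : ⨆ x, (φ x : EReal) - F x ≤ c := by
  refine iSup_le fun x => ?_
  by_cases hx : F x = ⊤
  · simp [hx]
  · rw [← coe_toReal hx (hF x)]
    exact_mod_cast h x hx

theorem ne_top_of_forall_coe_sub_sub_le {X : Type*} {F : X → EReal} {φ r : X → ℝ} {x₀ y : X}
    (hx₀ : F x₀ ≠ ⊤) (hx₀' : F x₀ ≠ ⊥)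
    (hy : ∀ x, (φ x : EReal) - F x - r x ≤ (φ y : EReal) - F y - r y) : F y ≠ ⊤ := by
  intro htop
  have h := hy x₀
  rw [htop, ← coe_toReal hx₀ hx₀'] at h
  simp only [sub_top, bot_sub, le_bot_iff] at h
  exact coe_ne_bot _ (by exact_mod_cast h)

theorem ne_top_of_forall_coe_add_le {X : Type*} {G : X → EReal} {ψ : X → ℝ} {x₀ y : X}
    (hx₀ : G x₀ ≠ ⊤) (hy : ∀ x, (ψ y : EReal) + G y ≤ ψ x + G x) : G y ≠ ⊤ := by
  have h : (ψ y : EReal) + G y < ⊤ := (hy x₀).trans_lt (add_lt_top (coe_ne_top _) hx₀)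
  rintro htop
  simp [htop] at h

end EReal

section FenchelConjugate

variable {E : Type*} [NormedAddCommGroup E] [InnerProductSpace ℝ E]

noncomputable def fenchelConjugate (f : E → EReal) (q : E) : EReal :=
  ⨆ x, ((⟪q, x⟫ : ℝ) : EReal) - f x

theorem coe_inner_sub_le_fenchelConjugate (f : E → EReal) (q x : E) :
    ((⟪q, x⟫ : ℝ) : EReal) - f x ≤ fenchelConjugate f q :=
  le_iSup (fun x => ((⟪q, x⟫ : ℝ) : EReal) - f x) x

theorem fenchelConjugate_neg_eq_of_forall_le {g : E → EReal} (hg : ∀ x, g x ≠ ⊥) {p y : E}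
    {v : ℝ} (hv : (v : EReal) = g y)
    (hy : ∀ x, ((⟪p, y⟫ : ℝ) : EReal) + g y ≤ ((⟪p, x⟫ : ℝ) : EReal) + g x) :
    fenchelConjugate g (-p) = ((-⟪p, y⟫ - v : ℝ) : EReal) := by
  refine le_antisymm (EReal.iSup_coe_sub_le hg fun x hx => ?_) ?_
  · have h := hy x
    rw [← hv, ← EReal.coe_toReal hx (hg x)] at h
    have h' : ⟪p, y⟫ + v ≤ ⟪p, x⟫ + (g x).toReal := by exact_mod_cast h
    rw [inner_neg_left]
    linarith
  · have h := coe_inner_sub_le_fenchelConjugate g (-p) y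
    rwa [← hv, inner_neg_left] at h

theorem fenchelConjugate_le_of_forall_sub_sq_le {f : E → EReal} (hf : ∀ x, f x ≠ ⊥) {q y : E}
    {v ρ δ : ℝ} (hv : (v : EReal) = f y) (hρ : 0 ≤ ρ) (hδ : ∀ x, f x ≠ ⊤ → ρ / 2 * ‖x‖ ^ 2 ≤ δ)
    (hy : ∀ x, ((⟪q, x⟫ : ℝ) : EReal) - f x - ((ρ / 2 * ‖x‖ ^ 2 : ℝ) : EReal) ≤
      ((⟪q, y⟫ : ℝ) : EReal) - f y - ((ρ / 2 * ‖y‖ ^ 2 : ℝ) : EReal)) :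
    fenchelConjugate f q ≤ ((⟪q, y⟫ - v + δ : ℝ) : EReal) := by
  refine EReal.iSup_coe_sub_le hf fun x hx => ?_
  have h := hy x
  rw [← hv, ← EReal.coe_toReal hx (hf x)] at h
  have h' : ⟪q, x⟫ - (f x).toReal - ρ / 2 * ‖x‖ ^ 2 ≤ ⟪q, y⟫ - v - ρ / 2 * ‖y‖ ^ 2 := by
    exact_mod_cast h
  have hy0 : 0 ≤ ρ / 2 * ‖y‖ ^ 2 := by positivity
  linarith [hδ x hx]

end FenchelConjugate

theorem norm_sq_half_le_sSup {E : Type*} [SeminormedAddCommGroup E] {s : Set E}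
    (hs : Bornology.IsBounded s) {x : E} (hx : x ∈ s) :
    ‖x‖ ^ 2 / 2 ≤ sSup ((fun x : E => ‖x‖ ^ 2 / 2) '' s) := by
  obtain ⟨C, hC⟩ := hs.exists_norm_le
  refine le_csSup ⟨C ^ 2 / 2, ?_⟩ (Set.mem_image_of_mem _ hx)
  rintro _ ⟨y, hy, rfl⟩
  dsimp only
  gcongr
  exact hC y hy

-- Also covers `D = 0`, where `ε / (3 * D) = 0` by Lean's convention `x / 0 = 0`.
theorem div_three_mul_div_two_mul_le {ε D t : ℝ} (hε : 0 ≤ ε) (hD : 0 ≤ D) (ht : t / 2 ≤ D) :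
    ε / (3 * D) / 2 * t ≤ ε / 3 :=
  calc ε / (3 * D) / 2 * t = ε / 3 * (t / 2 / D) := by ring
    _ ≤ ε / 3 := mul_le_of_le_one_right (by positivity) (div_le_one_of_le₀ ht hD)

theorem abs_real_inner_le_of_norm_le_mul_of_norm_le_div {F : Type*} [SeminormedAddCommGroup F]
    [InnerProductSpace ℝ F] {p y : F} {a b R : ℝ} (hR : 0 < R) (hp : ‖p‖ ≤ a * R)
    (hy : ‖y‖ ≤ b / R) : |⟪p, y⟫| ≤ a * b :=
  calc |⟪p, y⟫| ≤ ‖p‖ * ‖y‖ := abs_real_inner_le_norm p y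
    _ ≤ a * R * (b / R) := mul_le_mul hp hy (norm_nonneg y) ((norm_nonneg p).trans hp)
    _ = a * b := by field_simp

theorem approximate_primal_solution_estimate_general
    {H : Type*} [NormedAddCommGroup H] [InnerProductSpace ℝ H] [CompleteSpace H]
    {m : ℕ}
    (f : H → EReal) (g : EuclideanSpace ℝ (Fin m) → EReal)
    (hf_proper_top : ∃ x, f x ≠ ⊤) (hf_proper_bot : ∀ x, f x ≠ ⊥)
    (hf_bdd : Bornology.IsBounded {x : H | f x < ⊤})
    (hg_proper_top : ∃ x, g x ≠ ⊤) (hg_proper_bot : ∀ x, g x ≠ ⊥)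
    (A : H →L[ℝ] EuclideanSpace ℝ (Fin m))
    (ε R Df ρ : ℝ) (hε : 0 < ε) (hR : 0 < R)
    (hDf : Df = sSup ((fun x : H => ‖x‖ ^ 2 / 2) '' {x : H | f x < ⊤}))
    (hρ : ρ = ε / (3 * Df))
    (θ : EuclideanSpace ℝ (Fin m) → ℝ)
    (hθ : ∀ p : EuclideanSpace ℝ (Fin m),
      (θ p : EReal) =
        (⨆ x : H, ((⟪ContinuousLinearMap.adjoint A p, x⟫ : ℝ) : EReal) - f x) +
        (⨆ x : EuclideanSpace ℝ (Fin m), ((⟪-p, x⟫ : ℝ) : EReal) - g x))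
    (pstar : EuclideanSpace ℝ (Fin m))
    (vD : ℝ) (hvD : vD = -θ pstar)
    (p : EuclideanSpace ℝ (Fin m)) (xfp : H) (xgp : EuclideanSpace ℝ (Fin m))
    (hxfp : ∀ x : H,
      ((⟪ContinuousLinearMap.adjoint A p, x⟫ : ℝ) : EReal) - f x -
          ((ρ / 2 * ‖x‖ ^ 2 : ℝ) : EReal) ≤
        ((⟪ContinuousLinearMap.adjoint A p, xfp⟫ : ℝ) : EReal) - f xfp -
          ((ρ / 2 * ‖xfp‖ ^ 2 : ℝ) : EReal))
    (hxgp : ∀ x : EuclideanSpace ℝ (Fin m),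
      ((⟪p, xgp⟫ : ℝ) : EReal) + g xgp ≤ ((⟪p, x⟫ : ℝ) : EReal) + g x)
    (h1 : 0 ≤ θ p - θ pstar) (h2 : θ p - θ pstar ≤ ε)
    (h3 : ‖A xfp - xgp‖ ≤ 2 * ε / R)
    (h4 : ‖p‖ ≤ 2 * Real.sqrt 2 * R) :
    ∃ vf vg : ℝ, (vf : EReal) = f xfp ∧ (vg : EReal) = g xgp ∧
      |vf + vg - vD| ≤ 2 * (2 * Real.sqrt 2 + 1) * ε := by
  obtain ⟨x₀, hx₀⟩ := hf_proper_top
  obtain ⟨y₀, hy₀⟩ := hg_proper_top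
  obtain ⟨vf, hvf⟩ : ∃ vf : ℝ, (vf : EReal) = f xfp := ⟨_, EReal.coe_toReal
    (EReal.ne_top_of_forall_coe_sub_sub_le hx₀ (hf_proper_bot x₀) hxfp) (hf_proper_bot xfp)⟩
  obtain ⟨vg, hvg⟩ : ∃ vg : ℝ, (vg : EReal) = g xgp :=
    ⟨_, EReal.coe_toReal (EReal.ne_top_of_forall_coe_add_le hy₀ hxgp) (hg_proper_bot xgp)⟩
  refine ⟨vf, vg, hvf, hvg, ?_⟩
  have hDf_le : ∀ x, f x ≠ ⊤ → ‖x‖ ^ 2 / 2 ≤ Df := fun x hx =>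
    hDf ▸ norm_sq_half_le_sSup hf_bdd (lt_top_iff_ne_top.2 hx)
  have hDf0 : 0 ≤ Df := (by positivity : (0 : ℝ) ≤ ‖x₀‖ ^ 2 / 2).trans (hDf_le x₀ hx₀)
  have hsmooth : ∀ x, f x ≠ ⊤ → ρ / 2 * ‖x‖ ^ 2 ≤ ε / 3 := fun x hx =>
    hρ ▸ div_three_mul_div_two_mul_le hε.le hDf0 (hDf_le x hx)
  have hθp : (θ p : EReal) = fenchelConjugate f (A.adjoint p) + fenchelConjugate g (-p) := hθ p
  rw [fenchelConjugate_neg_eq_of_forall_le hg_proper_bot hvg hxgp] at hθp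
  have hf_conj : fenchelConjugate f (A.adjoint p) = ((θ p - (-⟪p, xgp⟫ - vg) : ℝ) : EReal) := by
    rw [EReal.coe_sub, hθp, EReal.add_sub_cancel_right]
  have hθ_lower : ⟪p, A xfp⟫ - vf ≤ θ p - (-⟪p, xgp⟫ - vg) := by
    have h := coe_inner_sub_le_fenchelConjugate f (A.adjoint p) xfp
    rw [hf_conj, ← hvf, A.adjoint_inner_left] at h
    exact_mod_cast h
  have hθ_upper : θ p - (-⟪p, xgp⟫ - vg) ≤ ⟪p, A xfp⟫ - vf + ε / 3 := by
    have h := fenchelConjugate_le_of_forall_sub_sq_le hf_proper_bot hvf (hρ ▸ by positivity)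
      hsmooth hxfp
    rw [hf_conj, A.adjoint_inner_left] at h
    exact_mod_cast h
  have hgap : |⟪p, A xfp - xgp⟫| ≤ 2 * Real.sqrt 2 * (2 * ε) :=
    abs_real_inner_le_of_norm_le_mul_of_norm_le_div hR h4 h3
  rw [inner_sub_right, abs_le] at hgap
  rw [hvD, abs_le]
  constructor <;> linarith [hgap.1, hgap.2]

/-- Let `ε > 0`, `R > 0`, `D_f = sup{‖x‖²/2 : x ∈ dom f}`, `ρ = ε/(3 D_f)`,
and let `pstar` be a minimizer of the dual objective `θ(p) = f*(A*p) + g*(−p)`, so that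
`v(D) = −θ(pstar)`. For `p ∈ ℝ^m`, let `x_{f,p} ∈ H` be the unique maximizer of
`x ↦ ⟨A*p,x⟩ − f(x) − (ρ/2)‖x‖²`, let `x_{g,p} ∈ ℝ^m` be the unique minimizer of
`x ↦ ⟨p,x⟩ + g(x)`. If `p ∈ ℝ^m` satisfies `0 ≤ θ(p) − θ(pstar) ≤ ε`,
`‖A x_{f,p} − x_{g,p}‖ ≤ 2ε/R` and `‖p‖ ≤ 2√2 R`, then
`| f(x_{f,p}) + g(x_{g,p}) − v(D) | ≤ 2(2√2 + 1) ε`. -/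
theorem approximate_primal_solution_estimate
    {H : Type*} [NormedAddCommGroup H] [InnerProductSpace ℝ H] [CompleteSpace H]
    {m : ℕ} (μ : ℝ) (hμ : 0 < μ)
    (f : H → EReal) (g : EuclideanSpace ℝ (Fin m) → EReal)
    (hf_proper_top : ∃ x, f x ≠ ⊤) (hf_proper_bot : ∀ x, f x ≠ ⊥)
    (hf_convex : ∀ x y : H, ∀ a b : ℝ, 0 ≤ a → 0 ≤ b → a + b = 1 →
      f (a • x + b • y) ≤ (a : EReal) * f x + (b : EReal) * f y)
    (hf_lsc : LowerSemicontinuous f)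
    (hf_bdd : Bornology.IsBounded {x : H | f x < ⊤})
    (hg_proper_top : ∃ x, g x ≠ ⊤) (hg_proper_bot : ∀ x, g x ≠ ⊥)
    (hg_lsc : LowerSemicontinuous g)
    (hg_strconv : ∀ x y : EuclideanSpace ℝ (Fin m), ∀ a b : ℝ, 0 ≤ a → 0 ≤ b → a + b = 1 →
      g (a • x + b • y) - ((μ / 2 * ‖a • x + b • y‖ ^ 2 : ℝ) : EReal) ≤
        (a : EReal) * (g x - ((μ / 2 * ‖x‖ ^ 2 : ℝ) : EReal)) +
        (b : EReal) * (g y - ((μ / 2 * ‖y‖ ^ 2 : ℝ) : EReal)))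
    (A : H →L[ℝ] EuclideanSpace ℝ (Fin m))
    (ε R Df ρ : ℝ) (hε : 0 < ε) (hR : 0 < R)
    (hDf : Df = sSup ((fun x : H => ‖x‖ ^ 2 / 2) '' {x : H | f x < ⊤}))
    (hρ : ρ = ε / (3 * Df))
    (θ : EuclideanSpace ℝ (Fin m) → ℝ)
    (hθ : ∀ p : EuclideanSpace ℝ (Fin m),
      (θ p : EReal) =
        (⨆ x : H, ((⟪ContinuousLinearMap.adjoint A p, x⟫ : ℝ) : EReal) - f x) +
        (⨆ x : EuclideanSpace ℝ (Fin m), ((⟪-p, x⟫ : ℝ) : EReal) - g x))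
    (pstar : EuclideanSpace ℝ (Fin m))
    (hpstar : ∀ p : EuclideanSpace ℝ (Fin m), θ pstar ≤ θ p)
    (vD : ℝ) (hvD : vD = -θ pstar)
    (p : EuclideanSpace ℝ (Fin m)) (xfp : H) (xgp : EuclideanSpace ℝ (Fin m))
    (hxfp : ∀ x : H,
      ((⟪ContinuousLinearMap.adjoint A p, x⟫ : ℝ) : EReal) - f x -
          ((ρ / 2 * ‖x‖ ^ 2 : ℝ) : EReal) ≤
        ((⟪ContinuousLinearMap.adjoint A p, xfp⟫ : ℝ) : EReal) - f xfp -
          ((ρ / 2 * ‖xfp‖ ^ 2 : ℝ) : EReal))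
    (hxgp : ∀ x : EuclideanSpace ℝ (Fin m),
      ((⟪p, xgp⟫ : ℝ) : EReal) + g xgp ≤ ((⟪p, x⟫ : ℝ) : EReal) + g x)
    (h1 : 0 ≤ θ p - θ pstar) (h2 : θ p - θ pstar ≤ ε)
    (h3 : ‖A xfp - xgp‖ ≤ 2 * ε / R)
    (h4 : ‖p‖ ≤ 2 * Real.sqrt 2 * R) :
    ∃ vf vg : ℝ, (vf : EReal) = f xfp ∧ (vg : EReal) = g xgp ∧
      |vf + vg - vD| ≤ 2 * (2 * Real.sqrt 2 + 1) * ε :=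
  approximate_primal_solution_estimate_general f g hf_proper_top hf_proper_bot hf_bdd hg_proper_top
    hg_proper_bot A ε R Df ρ hε hR hDf hρ θ hθ pstar vD hvD p xfp xgp hxfp hxgp h1 h2 h3 h4
end
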